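/- arXiv:2105.07470 — 10 statements merged into one kernel-verified Lean document; each statement's English description precedes it below -/
import Mathlib

section
/- Let 𝒜 be an unambiguous finite automaton (UFA) with n ≥ 0 states that recognizes a language L ⊆ Σ*. Then there exists a UFA with at most √(n+1) · 2^(n/2) states that recognizes the complement language Σ* \ L. -/
/-- A nondeterministic finite automaton with state type `Q` and alphabet `A`:
transition relation `δ`, initial states `I`, accepting states `F`. -/
structure NFA' (Q A : Type) where
  δ : Q → A → Q → Prop
  I : Set Q
  F : Set Q

namespace NFA'

variable {Q A : Type}

/-- `M.Steps q w q'` holds iff there is a run from `q` to `q'` reading the word `w`. -/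
def Steps (M : NFA' Q A) : Q → List A → Q → Prop
  | q, [], q' => q = q'
  | q, a :: w, q' => ∃ p, M.δ q a p ∧ M.Steps p w q'

/-- An accepting run for the word `w`, given as the sequence of visited states. -/
def IsAccRun (M : NFA' Q A) (w : List A) (r : Fin (w.length + 1) → Q) : Prop :=
  r 0 ∈ M.I ∧ r (Fin.last w.length) ∈ M.F ∧
    ∀ i : Fin w.length, M.δ (r i.castSucc) (w.get i) (r i.succ)

/-- The language recognized by `M`: words with at least one accepting run. -/
def Lang (M : NFA' Q A) : Set (List A) :=
  {w | ∃ r, M.IsAccRun w r}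

/-- `M` is unambiguous (a UFA) if every word has at most one accepting run. -/
def Unambiguous (M : NFA' Q A) : Prop :=
  ∀ (w : List A) (r r' : Fin (w.length + 1) → Q),
    M.IsAccRun w r → M.IsAccRun w r' → r = r'

/-- The state set `{δ(I,w) | w ∈ Σ*}` of the forward determinization of `M`. -/
def fwdStates (M : NFA' Q A) : Set (Set Q) :=
  {S | ∃ w : List A, S = {r | ∃ q ∈ M.I, M.Steps q w r}}

/-- The state set `{δ⁻¹(w,F) | w ∈ Σ*}` of the backward determinization of `M`. -/
def bwdStates (M : NFA' Q A) : Set (Set Q) :=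
  {S | ∃ w : List A, S = {r | ∃ q ∈ M.F, M.Steps r w q}}

end NFA'

/-!
The forward subset construction, restricted to the reachable sets `δ(I, u)`, is a deterministic
automaton, and the backward one on the sets `δ⁻¹(v, F)` is codeterministic; complementing their
acceptance conditions gives two unambiguous automata for the complement. Unambiguity of `M` means
that every forward set meets every backward set in at most one state: two common states would give
two accepting runs on `uv`. For two such families `𝒮`, `𝒯` of subsets of an `n`-set,
`|𝒮| |𝒯| ≤ (n + 1) 2ⁿ`: a pair `(S, T)` is determined by `S` and `D = S ∆ T`, and for fixed `D`
at most `n + 1` sets `S` occur, by induction on `n`, since deleting a point identifies at most one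
pair of them. The smaller automaton has at most `√((n + 1) 2ⁿ)` states.
-/
open Finset
open scoped symmDiff

namespace Finset
variable {α : Type*} [DecidableEq α] {ℱ : Finset (Finset α)} {D : Finset α}

theorem card_inter_memberSubfamily_nonMemberSubfamily_le_one (a : α)
    (h : ∀ s ∈ ℱ, ∀ t ∈ ℱ, #(s ∩ (t ∆ D)) ≤ 1) :
    #(ℱ.memberSubfamily a ∩ ℱ.nonMemberSubfamily a) ≤ 1 := by
  have key : ∀ s ∈ ℱ.memberSubfamily a ∩ ℱ.nonMemberSubfamily a,
      ∀ t ∈ ℱ.memberSubfamily a ∩ ℱ.nonMemberSubfamily a, Disjoint s (t ∆ D) := by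
    intro s hs t ht
    simp only [mem_inter, mem_memberSubfamily, mem_nonMemberSubfamily] at hs ht
    -- Of `t` and `insert a t`, one has `a` in its symmetric difference with `D`; intersected
    -- with `insert a s` that set already contains `a`, so it has no room for a point of `s`.
    obtain ⟨t', ht', hat', ht't⟩ : ∃ t' ∈ ℱ, a ∈ t' ∆ D ∧ ∀ y ≠ a, y ∈ t' ∆ D ↔ y ∈ t ∆ D := by
      by_cases haD : a ∈ D
      · exact ⟨t, ht.2.1, by simp [mem_symmDiff, haD, ht.2.2], fun _ _ => Iff.rfl⟩
      · refine ⟨insert a t, ht.1.1, by simp [mem_symmDiff, haD], fun y hy => ?_⟩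
        simp [mem_symmDiff, hy]
    rw [disjoint_left]
    intro y hys hyt
    have hya : y ≠ a := fun e => hs.1.2 (e ▸ hys)
    exact hya (card_le_one.1 (h _ hs.1.1 t' ht') y
      (mem_inter.2 ⟨mem_insert_of_mem hys, (ht't y hya).2 hyt⟩) a
      (mem_inter.2 ⟨mem_insert_self a s, hat'⟩))
  refine card_le_one.2 fun s hs t ht => ?_
  have hst := key s hs t ht
  have hts := key t ht s hs
  have hss := key s hs s hs
  have htt := key t ht t ht
  -- `Disjoint s (s ∆ D)` says `s ⊆ D`, and then `Disjoint s (t ∆ D)` says `s ⊆ t`.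
  ext y
  simp only [disjoint_left, mem_symmDiff] at hst hts hss htt
  grind

theorem card_le_card_add_one_of_card_inter_symmDiff_le_one {U : Finset α}
    (hU : ∀ s ∈ ℱ, s ⊆ U) (h : ∀ s ∈ ℱ, ∀ t ∈ ℱ, #(s ∩ (t ∆ D)) ≤ 1) : #ℱ ≤ #U + 1 := by
  induction U using Finset.induction_on generalizing ℱ with
  | empty =>
    refine card_le_one.2 fun s hs t ht => ?_
    rw [subset_empty.1 (hU s hs), subset_empty.1 (hU t ht)]
  | insert a U haU ih =>
    have himage : #(ℱ.memberSubfamily a ∪ ℱ.nonMemberSubfamily a) ≤ #U + 1 := by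
      rw [memberSubfamily_union_nonMemberSubfamily]
      refine ih ?_ ?_
      · simp only [mem_image, forall_exists_index, and_imp, forall_apply_eq_imp_iff₂]
        intro s hs
        simpa [erase_eq_of_notMem haU] using erase_subset_erase a (hU s hs)
      · simp only [mem_image, forall_exists_index, and_imp, forall_apply_eq_imp_iff₂]
        intro s hs t ht
        refine (card_le_card ?_).trans (h s hs t ht)
        intro y
        simp only [mem_inter, mem_erase, mem_symmDiff]
        tauto
    have := card_inter_memberSubfamily_nonMemberSubfamily_le_one a h
    rw [← card_memberSubfamily_add_card_nonMemberSubfamily a, ← card_union_add_card_inter,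
      card_insert_of_notMem haU]
    omega

variable [Fintype α] {𝒮 𝒯 : Finset (Finset α)}

theorem card_filter_symmDiff_eq_le (h : ∀ s ∈ 𝒮, ∀ t ∈ 𝒯, #(s ∩ t) ≤ 1) (D : Finset α) :
    #{p ∈ 𝒮 ×ˢ 𝒯 | p.1 ∆ p.2 = D} ≤ Fintype.card α + 1 := by
  have hsnd : ∀ p ∈ {p ∈ 𝒮 ×ˢ 𝒯 | p.1 ∆ p.2 = D}, p.1 ∆ D = p.2 := by
    intro p hp
    rw [← (mem_filter.1 hp).2, symmDiff_symmDiff_cancel_left]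
  calc _ ≤ #{s ∈ 𝒮 | s ∆ D ∈ 𝒯} := by
        refine card_le_card_of_injOn Prod.fst (fun p hp => ?_) (fun p hp q hq hpq => ?_)
        · obtain ⟨hp₁, hp₂⟩ := mem_product.1 (mem_filter.1 hp).1
          exact mem_filter.2 ⟨hp₁, hsnd p hp ▸ hp₂⟩
        · rw [Prod.ext_iff, ← hsnd p hp, ← hsnd q hq]
          exact ⟨hpq, congrArg (· ∆ D) hpq⟩
    _ ≤ #(univ : Finset α) + 1 :=
        card_le_card_add_one_of_card_inter_symmDiff_le_one (fun s _ => subset_univ s)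
          fun s hs t ht => h s (mem_filter.1 hs).1 _ (mem_filter.1 ht).2
    _ = _ := by rw [card_univ]

theorem card_mul_card_le_of_card_inter_le_one (h : ∀ s ∈ 𝒮, ∀ t ∈ 𝒯, #(s ∩ t) ≤ 1) :
    #𝒮 * #𝒯 ≤ (Fintype.card α + 1) * 2 ^ Fintype.card α := by
  calc #𝒮 * #𝒯 = #(𝒮 ×ˢ 𝒯) := (card_product _ _).symm
    _ = ∑ D : Finset α, #{p ∈ 𝒮 ×ˢ 𝒯 | p.1 ∆ p.2 = D} :=
        card_eq_sum_card_fiberwise fun _ _ => mem_univ _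
    _ ≤ ∑ _D : Finset α, (Fintype.card α + 1) :=
        sum_le_sum fun D _ => card_filter_symmDiff_eq_le h D
    _ = _ := by rw [sum_const, card_univ, Fintype.card_finset, smul_eq_mul, mul_comm]

end Finset

theorem Set.natCard_mul_natCard_le_of_inter_subsingleton {α : Type*} [Finite α]
    {𝒮 𝒯 : Set (Set α)} (h : ∀ s ∈ 𝒮, ∀ t ∈ 𝒯, (s ∩ t).Subsingleton) :
    Nat.card 𝒮 * Nat.card 𝒯 ≤ (Nat.card α + 1) * 2 ^ Nat.card α := by
  classical
  have := Fintype.ofFinite α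
  have natCard_eq (𝒳 : Set (Set α)) : Nat.card 𝒳 = #{s : Finset α | ↑s ∈ 𝒳} := by
    rw [← Fintype.card_subtype, ← Nat.card_eq_fintype_card]
    exact Nat.card_congr (Fintype.finsetEquivSet.subtypeEquiv fun s => Iff.rfl).symm
  rw [natCard_eq, natCard_eq, Nat.card_eq_fintype_card]
  refine card_mul_card_le_of_card_inter_le_one fun s hs t ht => card_le_one.2 fun a ha b hb => ?_
  exact h s (mem_filter.1 hs).2 t (mem_filter.1 ht).2 (by simpa using ha) (by simpa using hb)

namespace NFA'

variable {Q A : Type} (M : NFA' Q A)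

def IsRun (w : List A) (r : Fin (w.length + 1) → Q) : Prop :=
  ∀ i : Fin w.length, M.δ (r i.castSucc) (w.get i) (r i.succ)

def post (S : Set Q) (w : List A) : Set Q :=
  {p | ∃ q ∈ S, M.Steps q w p}

def pre (w : List A) (T : Set Q) : Set Q :=
  {q | ∃ p ∈ T, M.Steps q w p}

variable {M}

theorem isRun_cons {a : A} {w : List A} {q : Q} {r : Fin (w.length + 1) → Q} :
    M.IsRun (a :: w) (Fin.cons q r) ↔ M.δ q a (r 0) ∧ M.IsRun w r := by
  simp [IsRun, Fin.forall_fin_succ]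

theorem steps_iff_exists_isRun {w : List A} {q q' : Q} :
    M.Steps q w q' ↔ ∃ r, r 0 = q ∧ r (Fin.last w.length) = q' ∧ M.IsRun w r := by
  induction w generalizing q with
  | nil =>
    simp only [Steps, IsRun, Fin.last_zero, List.length_nil, IsEmpty.forall_iff, and_true]
    exact ⟨fun h => ⟨fun _ => q, rfl, h⟩, fun ⟨r, h0, h1⟩ => h0 ▸ h1⟩
  | cons a w ih =>
    rw [Fin.exists_fin_succ_pi]
    simp only [Steps, ih, isRun_cons, Fin.cons_zero, List.length_cons, ← Fin.succ_last,
      Fin.cons_succ]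
    grind

theorem steps_append {u v : List A} {q q' : Q} :
    M.Steps q (u ++ v) q' ↔ ∃ p, M.Steps q u p ∧ M.Steps p v q' := by
  induction u generalizing q with
  | nil => simp [Steps]
  | cons a u ih => simp only [List.cons_append, Steps, ih]; grind

theorem exists_isRun_append {u v : List A} {q p f : Q} (hu : M.Steps q u p)
    (hv : M.Steps p v f) :
    ∃ r : Fin ((u ++ v).length + 1) → Q, r 0 = q ∧ r (Fin.last _) = f ∧ M.IsRun (u ++ v) r ∧
      r ⟨u.length, by simp⟩ = p := by
  induction u generalizing q with
  | nil =>
    obtain ⟨r, h0, hlast, hr⟩ := steps_iff_exists_isRun.1 hv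
    exact ⟨r, h0.trans hu.symm, hlast, hr, h0⟩
  | cons a u ih =>
    obtain ⟨q', hδ, hu⟩ := hu
    obtain ⟨r, h0, hlast, hr, hmid⟩ := ih hu
    exact ⟨Fin.cons q r, rfl, hlast, isRun_cons.2 ⟨h0 ▸ hδ, hr⟩, hmid⟩

theorem Unambiguous.inter_subsingleton (hM : M.Unambiguous) {S T : Set Q}
    (hS : S ∈ M.fwdStates) (hT : T ∈ M.bwdStates) : (S ∩ T).Subsingleton := by
  obtain ⟨u, rfl⟩ := hS
  obtain ⟨v, rfl⟩ := hT
  rintro x ⟨⟨q, hq, hqx⟩, f, hf, hxf⟩ y ⟨⟨q', hq', hqy⟩, f', hf', hyf⟩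
  obtain ⟨r, h0, hlast, hr, rfl⟩ := exists_isRun_append hqx hxf
  obtain ⟨r', h0', hlast', hr', rfl⟩ := exists_isRun_append hqy hyf
  rw [hM _ r r' ⟨h0 ▸ hq, hlast ▸ hf, hr⟩ ⟨h0' ▸ hq', hlast' ▸ hf', hr'⟩]

theorem mem_lang_iff_steps {w : List A} : w ∈ M.Lang ↔ ∃ q ∈ M.I, ∃ f ∈ M.F, M.Steps q w f := by
  simp only [Lang, IsAccRun, Set.mem_ofPred_eq, steps_iff_exists_isRun]
  constructor
  · rintro ⟨r, h0, hlast, hr⟩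
    exact ⟨_, h0, _, hlast, r, rfl, rfl, hr⟩
  · rintro ⟨_, hq, _, hf, r, rfl, rfl, hr⟩
    exact ⟨r, hq, hf, hr⟩

theorem notMem_lang_iff_disjoint_post {w : List A} : w ∉ M.Lang ↔ Disjoint (M.post M.I w) M.F := by
  simp only [mem_lang_iff_steps, Set.disjoint_left, post, Set.mem_ofPred_eq]
  grind

theorem notMem_lang_iff_disjoint_pre {w : List A} : w ∉ M.Lang ↔ Disjoint (M.pre w M.F) M.I := by
  simp only [mem_lang_iff_steps, Set.disjoint_left, pre, Set.mem_ofPred_eq]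
  grind

theorem post_nil (S : Set Q) : M.post S [] = S := by
  simp [post, Steps]

theorem pre_nil (T : Set Q) : M.pre [] T = T := by
  simp [pre, Steps]

theorem post_append (S : Set Q) (u v : List A) : M.post S (u ++ v) = M.post (M.post S u) v := by
  ext; simp only [post, Set.mem_ofPred_eq, steps_append]; grind

theorem pre_append (u v : List A) (T : Set Q) : M.pre (u ++ v) T = M.pre u (M.pre v T) := by
  ext; simp only [pre, Set.mem_ofPred_eq, steps_append]; grind

theorem I_mem_fwdStates : M.I ∈ M.fwdStates :=
  ⟨[], (M.post_nil M.I).symm⟩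

theorem F_mem_bwdStates : M.F ∈ M.bwdStates :=
  ⟨[], (M.pre_nil M.F).symm⟩

theorem post_mem_fwdStates {S : Set Q} (hS : S ∈ M.fwdStates) (w : List A) :
    M.post S w ∈ M.fwdStates := by
  obtain ⟨u, rfl⟩ := hS
  exact ⟨u ++ w, (M.post_append _ u w).symm⟩

theorem pre_mem_bwdStates {T : Set Q} (hT : T ∈ M.bwdStates) (w : List A) :
    M.pre w T ∈ M.bwdStates := by
  obtain ⟨v, rfl⟩ := hT
  exact ⟨w ++ v, (M.pre_append w v _).symm⟩

theorem unambiguous_of_deterministic (hδ : ∀ q a p p', M.δ q a p → M.δ q a p' → p = p')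
    (hI : M.I.Subsingleton) : M.Unambiguous := by
  intro w r r' hr hr'
  funext i
  induction i using Fin.induction with
  | zero => exact hI hr.1 hr'.1
  | succ i ih => exact hδ _ _ _ _ (hr.2.2 i) (ih ▸ hr'.2.2 i)

theorem unambiguous_of_codeterministic (hδ : ∀ q q' a p, M.δ q a p → M.δ q' a p → q = q')
    (hF : M.F.Subsingleton) : M.Unambiguous := by
  intro w r r' hr hr'
  funext i
  induction i using Fin.reverseInduction with
  | last => exact hF hr.2.1 hr'.2.1
  | cast i ih => exact hδ _ _ _ _ (hr.2.2 i) (ih ▸ hr'.2.2 i)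

variable (M)

def fwdCompl : NFA' M.fwdStates A where
  δ S a S' := (S' : Set Q) = M.post S [a]
  I := {S | (S : Set Q) = M.I}
  F := {S | Disjoint (S : Set Q) M.F}

def bwdCompl : NFA' M.bwdStates A where
  δ T a T' := (T : Set Q) = M.pre [a] T'
  I := {T | Disjoint (T : Set Q) M.I}
  F := {T | (T : Set Q) = M.F}

variable {M}

theorem fwdCompl_steps {S S' : M.fwdStates} {w : List A} :
    M.fwdCompl.Steps S w S' ↔ (S' : Set Q) = M.post S w := by
  induction w generalizing S with
  | nil => rw [post_nil, eq_comm]; exact Subtype.ext_iff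
  | cons a w ih =>
    simp only [Steps, ih]
    rw [← List.singleton_append, post_append]
    exact ⟨fun ⟨_, hP, h⟩ => hP ▸ h, fun h => ⟨⟨_, M.post_mem_fwdStates S.2 [a]⟩, rfl, h⟩⟩

theorem bwdCompl_steps {T T' : M.bwdStates} {w : List A} :
    M.bwdCompl.Steps T w T' ↔ (T : Set Q) = M.pre w T' := by
  induction w generalizing T with
  | nil => rw [pre_nil]; exact Subtype.ext_iff
  | cons a w ih =>
    simp only [Steps, ih]
    rw [← List.singleton_append, pre_append]
    exact ⟨fun ⟨_, hP, h⟩ => h ▸ hP, fun h => ⟨⟨_, M.pre_mem_bwdStates T'.2 w⟩, h, rfl⟩⟩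

variable (M)

theorem fwdCompl_unambiguous : M.fwdCompl.Unambiguous :=
  unambiguous_of_deterministic (fun _ _ _ _ hp hp' => Subtype.ext (hp.trans hp'.symm))
    fun _ hS _ hS' => Subtype.ext (hS.trans hS'.symm)

theorem bwdCompl_unambiguous : M.bwdCompl.Unambiguous :=
  unambiguous_of_codeterministic (fun _ _ _ _ hq hq' => Subtype.ext (hq.trans hq'.symm))
    fun _ hT _ hT' => Subtype.ext (hT.trans hT'.symm)

theorem fwdCompl_lang : M.fwdCompl.Lang = M.Langᶜ := by
  ext w
  rw [mem_lang_iff_steps, Set.mem_compl_iff, notMem_lang_iff_disjoint_post]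
  simp only [fwdCompl_steps]
  constructor
  · rintro ⟨S, hS, S', hS', h⟩
    rwa [← hS, ← h]
  · exact fun h =>
      ⟨⟨_, M.I_mem_fwdStates⟩, rfl, ⟨_, M.post_mem_fwdStates M.I_mem_fwdStates w⟩, h, rfl⟩

theorem bwdCompl_lang : M.bwdCompl.Lang = M.Langᶜ := by
  ext w
  rw [mem_lang_iff_steps, Set.mem_compl_iff, notMem_lang_iff_disjoint_pre]
  simp only [bwdCompl_steps]
  constructor
  · rintro ⟨T, hT, T', hT', h⟩
    rwa [← hT', ← h]
  · exact fun h =>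
      ⟨⟨_, M.pre_mem_bwdStates M.F_mem_bwdStates w⟩, h, ⟨_, M.F_mem_bwdStates⟩, rfl, rfl⟩

end NFA'

theorem Nat.cast_le_sqrt_mul_two_rpow_of_sq_le {c n : ℕ} (h : c ^ 2 ≤ (n + 1) * 2 ^ n) :
    (c : ℝ) ≤ √(n + 1) * 2 ^ ((n : ℝ) / 2) := by
  have hsqrt : √((n + 1) * 2 ^ n) = √(n + 1) * 2 ^ ((n : ℝ) / 2) := by
    rw [Real.sqrt_mul (by positivity), Real.sqrt_eq_rpow (2 ^ n), ← Real.rpow_natCast,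
      ← Real.rpow_mul (by norm_num), mul_one_div]
  rw [← hsqrt, Real.le_sqrt (by positivity) (by positivity)]
  exact_mod_cast h

theorem ufa_complement_general {Q A : Type} [Fintype Q]
    (M : NFA' Q A) (hM : M.Unambiguous) :
    ∃ (Q' : Type) (_ : Fintype Q') (M' : NFA' Q' A),
      M'.Unambiguous ∧ M'.Lang = M.Langᶜ ∧
      (Fintype.card Q' : ℝ) ≤
        Real.sqrt (Fintype.card Q + 1) * 2 ^ ((Fintype.card Q : ℝ) / 2) := by
  have hprod : Nat.card M.fwdStates * Nat.card M.bwdStates ≤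
      (Fintype.card Q + 1) * 2 ^ Fintype.card Q := by
    rw [← Nat.card_eq_fintype_card]
    exact Set.natCard_mul_natCard_le_of_inter_subsingleton fun _ hS _ hT =>
      hM.inter_subsingleton hS hT
  rcases le_total (Nat.card M.fwdStates) (Nat.card M.bwdStates) with h | h
  · refine ⟨M.fwdStates, Fintype.ofFinite _, M.fwdCompl, M.fwdCompl_unambiguous,
      M.fwdCompl_lang, Nat.cast_le_sqrt_mul_two_rpow_of_sq_le ?_⟩
    rw [Fintype.card_eq_nat_card, sq]
    exact (Nat.mul_le_mul_left _ h).trans hprod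
  · refine ⟨M.bwdStates, Fintype.ofFinite _, M.bwdCompl, M.bwdCompl_unambiguous,
      M.bwdCompl_lang, Nat.cast_le_sqrt_mul_two_rpow_of_sq_le ?_⟩
    rw [Fintype.card_eq_nat_card, sq]
    exact (Nat.mul_le_mul_right _ h).trans hprod

/-- For any UFA with `n ≥ 0` states recognizing `L`, there is a UFA with at most
`√(n+1) · 2^(n/2)` states recognizing the complement of `L`. -/
theorem ufa_complement {Q A : Type} [Fintype Q] [Fintype A]
    (M : NFA' Q A) (hM : M.Unambiguous) :
    ∃ (Q' : Type) (_ : Fintype Q') (M' : NFA' Q' A),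
      M'.Unambiguous ∧ M'.Lang = M.Langᶜ ∧
      (Fintype.card Q' : ℝ) ≤
        Real.sqrt (Fintype.card Q + 1) * 2 ^ ((Fintype.card Q : ℝ) / 2) :=
  ufa_complement_general M hM
end

section
/- Let (V,E) be a finite simple graph with k cliques and ℓ cocliques. Then there is a UFA with |V| states (over some finite alphabet) whose forward determinization has at least k states and whose backward determinization has at least ℓ states. -/
/-- The UFA built from a graph `G` and a base vertex `v0`. -/
def mkNFA {V : Type} (G : SimpleGraph V) (v0 : V) : NFA' V (Set V ⊕ Set V) where
  δ q a q' := match a with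
    | Sum.inl X => q = v0 ∧ q' ∈ X ∧ G.IsClique X
    | Sum.inr Y => q ∈ Y ∧ q' = v0 ∧ Y.Pairwise fun u v => ¬ G.Adj u v
  I := {v0}
  F := {v0}

@[simp] lemma mkNFA_δ_inl {V : Type} (G : SimpleGraph V) (v0 q q' : V) (X : Set V) :
    (mkNFA G v0).δ q (Sum.inl X) q' ↔ q = v0 ∧ q' ∈ X ∧ G.IsClique X := Iff.rfl

@[simp] lemma mkNFA_δ_inr {V : Type} (G : SimpleGraph V) (v0 q q' : V) (Y : Set V) :
    (mkNFA G v0).δ q (Sum.inr Y) q' ↔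
      q ∈ Y ∧ q' = v0 ∧ Y.Pairwise fun u v => ¬ G.Adj u v := Iff.rfl

@[simp] lemma mkNFA_I {V : Type} (G : SimpleGraph V) (v0 : V) :
    (mkNFA G v0).I = {v0} := rfl

@[simp] lemma mkNFA_F {V : Type} (G : SimpleGraph V) (v0 : V) :
    (mkNFA G v0).F = {v0} := rfl

/-- For a graph with `k` cliques and `ℓ` cocliques there is a UFA with `|V|` states
(over some finite alphabet) whose forward determinization has at least `k` states
and whose backward determinization has at least `ℓ` states. -/
theorem graph_to_ufa {V : Type} [Fintype V] (G : SimpleGraph V) (k ℓ : ℕ)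
    (hk : {X : Set V | G.IsClique X}.ncard = k)
    (hℓ : {Y : Set V | Y.Pairwise fun u v => ¬ G.Adj u v}.ncard = ℓ) :
    ∃ (A : Type) (_ : Fintype A) (M : NFA' V A),
      M.Unambiguous ∧ k ≤ M.fwdStates.ncard ∧ ℓ ≤ M.bwdStates.ncard := by
  classical
  by_cases hV : Nonempty V
  · obtain ⟨v0⟩ := hV
    refine ⟨Set V ⊕ Set V, Fintype.ofFinite _, mkNFA G v0, ?_, ?_, ?_⟩
    · -- unambiguity
      intro w r r' hr hr'
      obtain ⟨hI, hF, hδ⟩ := hr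
      obtain ⟨hI', hF', hδ'⟩ := hr'
      simp only [mkNFA_I, mkNFA_F, Set.mem_singleton_iff] at hI hF hI' hF'
      funext p
      by_cases hp0 : p.val = 0
      · have hp : p = 0 := Fin.ext hp0
        rw [hp, hI, hI']
      · by_cases hpn : p.val = w.length
        · have hp : p = Fin.last w.length := Fin.ext hpn
          rw [hp, hF, hF']
        · have h1 : 0 < p.val := Nat.pos_of_ne_zero hp0
          have h2 : p.val < w.length := lt_of_le_of_ne (Nat.lt_succ_iff.mp p.isLt) hpn
          set i : Fin w.length := ⟨p.val, h2⟩ with hi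
          set j : Fin w.length := ⟨p.val - 1, by omega⟩ with hj
          have hic : i.castSucc = p := Fin.ext rfl
          have hjs : j.succ = p := Fin.ext (by simp [hj, Fin.val_succ]; omega)
          have hout := hδ i
          have hout' := hδ' i
          rw [hic] at hout hout'
          have hin := hδ j
          have hin' := hδ' j
          rw [hjs] at hin hin'
          cases ho : w.get i with
          | inl X =>
            rw [ho] at hout hout'
            rw [mkNFA_δ_inl] at hout hout'
            exact hout.1.trans hout'.1.symm
          | inr Y =>
            rw [ho] at hout hout'
            rw [mkNFA_δ_inr] at hout hout'
            cases hi2 : w.get j with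
            | inl X =>
              rw [hi2] at hin hin'
              rw [mkNFA_δ_inl] at hin hin'
              by_contra hne
              exact hout.2.2 hout.1 hout'.1 hne (hin.2.2 hin.2.1 hin'.2.1 hne)
            | inr Y' =>
              rw [hi2] at hin hin'
              rw [mkNFA_δ_inr] at hin hin'
              exact hin.2.1.trans hin'.2.1.symm
    · -- forward: all cliques appear
      rw [← hk]
      refine Set.ncard_le_ncard ?_ (Set.toFinite _)
      intro X hX
      refine ⟨[Sum.inl X], ?_⟩
      ext x
      simp only [NFA'.Steps, mkNFA_I, Set.mem_singleton_iff, mkNFA_δ_inl, Set.mem_setOf_eq]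
      constructor
      · intro hx
        exact ⟨v0, rfl, x, ⟨rfl, hx, hX⟩, rfl⟩
      · rintro ⟨q, rfl, p, ⟨-, hp, -⟩, rfl⟩
        exact hp
    · -- backward: all cocliques appear
      rw [← hℓ]
      refine Set.ncard_le_ncard ?_ (Set.toFinite _)
      intro Y hY
      refine ⟨[Sum.inr Y], ?_⟩
      ext x
      simp only [NFA'.Steps, mkNFA_F, Set.mem_singleton_iff, mkNFA_δ_inr, Set.mem_setOf_eq]
      constructor
      · intro hx
        exact ⟨v0, rfl, v0, ⟨hx, rfl, hY⟩, rfl⟩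
      · rintro ⟨q, rfl, p, ⟨hp, -, -⟩, rfl⟩
        exact hp
  · -- V is empty
    refine ⟨Unit, inferInstance, ⟨fun _ _ _ => False, ∅, ∅⟩, ?_, ?_, ?_⟩
    · intro w r r' hr _
      exact (hV ⟨r 0⟩).elim
    · have hsub : {X : Set V | G.IsClique X} ⊆ {(∅ : Set V)} := by
        intro X _
        have : X = ∅ := by
          ext x; exact (hV ⟨x⟩).elim
        simp [this]
      have h1 : k ≤ 1 := by
        rw [← hk]
        simpa using Set.ncard_le_ncard hsub (Set.finite_singleton _)
      have h2 : 1 ≤ (NFA'.fwdStates (⟨fun _ _ _ => False, ∅, ∅⟩ : NFA' V Unit)).ncard := by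
        rw [Nat.one_le_iff_ne_zero, ← Nat.pos_iff_ne_zero]
        exact (Set.ncard_pos (Set.toFinite _)).mpr ⟨_, [], rfl⟩
      omega
    · have hsub : {Y : Set V | Y.Pairwise fun u v => ¬ G.Adj u v} ⊆ {(∅ : Set V)} := by
        intro Y _
        have : Y = ∅ := by
          ext y; exact (hV ⟨y⟩).elim
        simp [this]
      have h1 : ℓ ≤ 1 := by
        rw [← hℓ]
        simpa using Set.ncard_le_ncard hsub (Set.finite_singleton _)
      have h2 : 1 ≤ (NFA'.bwdStates (⟨fun _ _ _ => False, ∅, ∅⟩ : NFA' V Unit)).ncard := by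
        rw [Nat.one_le_iff_ne_zero, ← Nat.pos_iff_ne_zero]
        exact (Set.ncard_pos (Set.toFinite _)).mpr ⟨_, [], rfl⟩
      omega
end

section
/- Let (V,E) be a finite simple graph. For any S ⊆ V, let P_S := { X ⊆ S | X is a clique and S \ X is a coclique }. Then |P_S| ≤ |S| + 1. -/
/-!
If `X` and `Y` both split `S` into a clique and a coclique, then `X \ Y` is a clique inside the
coclique `S \ Y`, so it has at most one vertex. Any family of subsets of `S` with this property has
at most `|S| + 1` members, by induction on `S`: removing a point `a` from every member merges two
members only when they are `X` and `insert a X`, and this happens for at most one `X`, since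
`a ∉ X, Y` with `insert a X \ Y` and `insert a Y \ X` subsingletons forces `X = Y`.
-/

namespace Set

variable {α : Type*}

theorem subset_of_insert_sdiff_subsingleton {a : α} {X Y : Set α} (haX : a ∉ X) (haY : a ∉ Y)
    (h : (insert a X \ Y).Subsingleton) : X ⊆ Y := by
  intro x hx
  by_contra hxY
  exact haX (h ⟨mem_insert_of_mem a hx, hxY⟩ ⟨mem_insert a X, haY⟩ ▸ hx)

theorem eq_insert_of_sdiff_singleton_eq {a : α} {X Y : Set α} (haX : a ∈ X) (haY : a ∉ Y)
    (h : X \ {a} = Y \ {a}) : X = insert a Y := by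
  rw [← insert_eq_of_mem haX, ← insert_sdiff_singleton, h, sdiff_singleton_eq_self haY]

theorem Subsingleton.ncard_le_one {s : Set α} (hs : s.Subsingleton) : s.ncard ≤ 1 :=
  (Set.ncard_le_one hs.finite).2 hs

variable {F : Set (Set α)}

theorem subsingleton_setOf_insert_mem (hF : ∀ X ∈ F, ∀ Y ∈ F, (X \ Y).Subsingleton) (a : α) :
    {X ∈ F | a ∉ X ∧ insert a X ∈ F}.Subsingleton := by
  rintro X ⟨hX, haX, hXa⟩ Y ⟨hY, haY, hYa⟩
  exact (subset_of_insert_sdiff_subsingleton haX haY (hF _ hXa Y hY)).antisymm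
    (subset_of_insert_sdiff_subsingleton haY haX (hF _ hYa X hX))

theorem injOn_sdiff_singleton (a : α) :
    InjOn (· \ {a}) (F \ {X ∈ F | a ∉ X ∧ insert a X ∈ F}) := by
  have key : ∀ X ∈ F, ∀ Y ∈ F, a ∈ X → a ∉ Y → X \ {a} = Y \ {a} →
      Y ∈ {X ∈ F | a ∉ X ∧ insert a X ∈ F} := fun X hX Y hY haX haY h =>
    ⟨hY, haY, eq_insert_of_sdiff_singleton_eq haX haY h ▸ hX⟩
  rintro X ⟨hX, hXD⟩ Y ⟨hY, hYD⟩ (h : X \ {a} = Y \ {a})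
  by_cases haX : a ∈ X <;> by_cases haY : a ∈ Y
  · rw [← insert_eq_of_mem haX, ← insert_eq_of_mem haY, ← insert_sdiff_singleton, h,
      insert_sdiff_singleton]
  · exact absurd (key X hX Y hY haX haY h) hYD
  · exact absurd (key Y hY X hX haY haX h.symm) hXD
  · rwa [sdiff_singleton_eq_self haX, sdiff_singleton_eq_self haY] at h

theorem ncard_le_ncard_add_one_of_sdiff_subsingleton {S : Set α} (hS : S.Finite) (hFS : F ⊆ 𝒫 S)
    (hF : ∀ X ∈ F, ∀ Y ∈ F, (X \ Y).Subsingleton) : F.ncard ≤ S.ncard + 1 := by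
  induction S, hS using Finite.induction_on generalizing F with
  | empty =>
    have : F ⊆ {∅} := fun X hX => subset_empty_iff.1 (hFS hX)
    simpa using ncard_le_ncard this
  | @insert a s has hs ih =>
    set D := {X ∈ F | a ∉ X ∧ insert a X ∈ F}
    have hD : D.Subsingleton := subsingleton_setOf_insert_mem hF a
    have himage : (· \ {a}) '' F ⊆ 𝒫 s := by
      rintro _ ⟨X, hX, rfl⟩ x ⟨hx, hxa⟩
      exact (hFS hX hx).resolve_left hxa
    have himage_card := ih himage <| by
      rintro _ ⟨X, hX, rfl⟩ _ ⟨Y, hY, rfl⟩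
      exact (hF X hX Y hY).anti fun x hx => ⟨hx.1.1, fun hxY => hx.2 ⟨hxY, hx.1.2⟩⟩
    calc F.ncard ≤ (F \ D).ncard + D.ncard :=
          ncard_le_ncard_sdiff_add_ncard _ _ hD.finite
      _ ≤ ((· \ {a}) '' F).ncard + 1 :=
          add_le_add
            (ncard_le_ncard_of_injOn _ (fun X hX => mem_image_of_mem _ hX.1)
              (injOn_sdiff_singleton a) (hs.finite_subsets.subset himage))
            hD.ncard_le_one
      _ ≤ s.ncard + 1 + 1 := add_le_add_left himage_card 1
      _ = (insert a s).ncard + 1 := by rw [ncard_insert_of_notMem has hs]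

end Set

theorem SimpleGraph.IsClique.sdiff_subsingleton {V : Type*} {G : SimpleGraph V} {S X Y : Set V}
    (hX : G.IsClique X) (hXS : X ⊆ S) (hY : G.IsIndepSet (S \ Y)) : (X \ Y).Subsingleton := by
  intro a ha b hb
  by_contra hab
  exact hY ⟨hXS ha.1, ha.2⟩ ⟨hXS hb.1, hb.2⟩ hab (hX ha.1 hb.1 hab)

/-- For any subset `S` of the vertices of a finite graph, the number of sets
`X ⊆ S` such that `X` is a clique and `S \ X` is a coclique is at most `|S| + 1`. -/
theorem card_clique_coclique_partitions_le {V : Type} [Fintype V]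
    (G : SimpleGraph V) (S : Set V) :
    {X : Set V | X ⊆ S ∧ G.IsClique X ∧
        (S \ X).Pairwise fun u v => ¬ G.Adj u v}.ncard ≤ S.ncard + 1 := by
  refine Set.ncard_le_ncard_add_one_of_sdiff_subsingleton S.toFinite (fun X hX => hX.1) ?_
  rintro X ⟨hXS, hX, -⟩ Y ⟨-, -, hY⟩
  exact hX.sdiff_subsingleton hXS hY
end

section
/- Let (V,E) be a finite simple graph. For any S ⊆ V, let R_S := { (X,Y) ∈ 2^S × 2^S | X ∪ Y = S, X is a clique, and Y is a coclique }. Then |R_S| ≤ 2|S| + 1. -/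
/-!
Induct on `S`. Deleting `v ∉ S` from both parts maps the covers of `insert v S` to covers of `S`,
and two covers with the same image differ only in which parts contain `v`. If two distinct covers
have the same image `(A, B)`, then `v` is adjacent to all of `A` and to none of `B`, which forces
`(A, B) = (S ∩ N(v), S \ N(v))`. So the deletion map is injective off the at most two covers
with `v` in the clique part and this image, and `|R_{S ∪ {v}}| ≤ |R_S| + 2`.
-/

open Set

theorem Set.eq_of_sdiff_singleton_eq {α : Type*} {s t : Set α} {a : α} (h : s \ {a} = t \ {a})
    (ha : a ∈ s ↔ a ∈ t) : s = t := by
  by_cases has : a ∈ s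
  · rw [← insert_sdiff_self_of_mem has, ← insert_sdiff_self_of_mem (ha.1 has), h]
  · rw [← sdiff_singleton_eq_self has, ← sdiff_singleton_eq_self (mt ha.2 has), h]

theorem Set.eq_inter_and_eq_sdiff_of_union_eq {α : Type*} {s t u N : Set α} (h : s ∪ t = u)
    (hs : s ⊆ N) (ht : t ⊆ Nᶜ) : s = u ∩ N ∧ t = u \ N := by
  subst h
  constructor <;> ext x <;> have := @hs x <;> have := @ht x <;>
    simp only [mem_inter_iff, mem_sdiff, mem_union, mem_compl_iff] at * <;> tauto

namespace SimpleGraph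

variable {V : Type*} {G : SimpleGraph V} {s S : Set V} {v : V}

theorem IsClique.sdiff_singleton_subset_neighborSet (hs : G.IsClique s) (hv : v ∈ s) :
    s \ {v} ⊆ G.neighborSet v :=
  fun _ hu => hs hv hu.1 (Ne.symm hu.2)

theorem IsIndepSet.sdiff_singleton_subset_compl_neighborSet (hs : G.IsIndepSet s) (hv : v ∈ s) :
    s \ {v} ⊆ (G.neighborSet v)ᶜ :=
  fun _ hu => hs hv hu.1 (Ne.symm hu.2)

variable (G) in
-- `R_S`, without the redundant conditions `X ⊆ S` and `Y ⊆ S`.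
def cliqueCocliqueCovers (S : Set V) : Set (Set V × Set V) :=
  {p | p.1 ∪ p.2 = S ∧ G.IsClique p.1 ∧ G.IsIndepSet p.2}

theorem finite_cliqueCocliqueCovers (hS : S.Finite) : (G.cliqueCocliqueCovers S).Finite :=
  (hS.finite_subsets.prod hS.finite_subsets).subset fun _ hp =>
    ⟨hp.1 ▸ subset_union_left, hp.1 ▸ subset_union_right⟩

theorem cliqueCocliqueCovers_empty : G.cliqueCocliqueCovers ∅ = {(∅, ∅)} := by
  ext ⟨X, Y⟩
  simp +contextual [cliqueCocliqueCovers]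

theorem sdiff_singleton_mem_cliqueCocliqueCovers {p : Set V × Set V} (hv : v ∉ S)
    (hp : p ∈ G.cliqueCocliqueCovers (insert v S)) :
    (p.1 \ {v}, p.2 \ {v}) ∈ G.cliqueCocliqueCovers S :=
  ⟨by rw [← union_sdiff_distrib, hp.1, insert_sdiff_self_of_notMem hv],
    hp.2.1.subset sdiff_subset, hp.2.2.mono sdiff_subset⟩

theorem sdiff_singleton_subset_neighborSet_of_ne {p q : Set V × Set V}
    (hp : p ∈ G.cliqueCocliqueCovers (insert v S)) (hq : q ∈ G.cliqueCocliqueCovers (insert v S))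
    (h1 : p.1 \ {v} = q.1 \ {v}) (h2 : p.2 \ {v} = q.2 \ {v}) (hne : p ≠ q) :
    (v ∈ p.1 ∨ v ∈ q.1) ∧ p.1 \ {v} ⊆ G.neighborSet v ∧ p.2 \ {v} ⊆ (G.neighborSet v)ᶜ := by
  have hvp : v ∈ p.1 ∨ v ∈ p.2 := by rw [← mem_union, hp.1]; exact mem_insert v S
  have hvq : v ∈ q.1 ∨ v ∈ q.2 := by rw [← mem_union, hq.1]; exact mem_insert v S
  have hN : v ∈ p.1 ∨ v ∈ q.1 → p.1 \ {v} ⊆ G.neighborSet v := by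
    rintro (h | h)
    · exact hp.2.1.sdiff_singleton_subset_neighborSet h
    · exact h1 ▸ hq.2.1.sdiff_singleton_subset_neighborSet h
  have hNc : v ∈ p.2 ∨ v ∈ q.2 → p.2 \ {v} ⊆ (G.neighborSet v)ᶜ := by
    rintro (h | h)
    · exact hp.2.2.sdiff_singleton_subset_compl_neighborSet h
    · exact h2 ▸ hq.2.2.sdiff_singleton_subset_compl_neighborSet h
  by_contra h
  exact hne (Prod.ext (eq_of_sdiff_singleton_eq h1 (by tauto))
    (eq_of_sdiff_singleton_eq h2 (by tauto)))

theorem ncard_cliqueCocliqueCovers_insert_le (hS : S.Finite) (hv : v ∉ S) :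
    (G.cliqueCocliqueCovers (insert v S)).ncard ≤ (G.cliqueCocliqueCovers S).ncard + 2 := by
  set N := G.neighborSet v
  set C := G.cliqueCocliqueCovers (insert v S)
  set D := {p ∈ C | v ∈ p.1 ∧ p.1 \ {v} ⊆ N ∧ p.2 \ {v} ⊆ Nᶜ}
  have hD : D ⊆ {(insert v (S ∩ N), S \ N), (insert v (S ∩ N), insert v (S \ N))} := by
    rintro p ⟨hpC, hv1, hN, hNc⟩
    obtain ⟨h1, h2⟩ := eq_inter_and_eq_sdiff_of_union_eq
      (sdiff_singleton_mem_cliqueCocliqueCovers hv hpC).1 hN hNc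
    have hp1 : p.1 = insert v (S ∩ N) := by rw [← h1, insert_sdiff_self_of_mem hv1]
    by_cases hv2 : v ∈ p.2
    · exact Or.inr (Prod.ext hp1 (by rw [← h2, insert_sdiff_self_of_mem hv2]))
    · exact Or.inl (Prod.ext hp1 (by rw [← h2, sdiff_singleton_eq_self hv2]))
  set f : Set V × Set V → Set V × Set V := fun p => (p.1 \ {v}, p.2 \ {v})
  have hinj : InjOn f (C \ D) := by
    rintro p ⟨hpC, hpD⟩ q ⟨hqC, hqD⟩ hpq
    obtain ⟨h1, h2⟩ : p.1 \ {v} = q.1 \ {v} ∧ p.2 \ {v} = q.2 \ {v} := Prod.ext_iff.1 hpq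
    by_contra hne
    obtain ⟨hv1 | hv1, hN, hNc⟩ := sdiff_singleton_subset_neighborSet_of_ne hpC hqC h1 h2 hne
    exacts [hpD ⟨hpC, hv1, hN, hNc⟩, hqD ⟨hqC, hv1, h1 ▸ hN, h2 ▸ hNc⟩]
  calc C.ncard ≤ (C \ D).ncard + D.ncard :=
        ncard_le_ncard_sdiff_add_ncard C D ((finite_cliqueCocliqueCovers (hS.insert v)).sep _)
    _ ≤ (G.cliqueCocliqueCovers S).ncard + 2 := by
        refine add_le_add (ncard_le_ncard_of_injOn f
          (fun p hp => sdiff_singleton_mem_cliqueCocliqueCovers hv hp.1) hinj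
          (finite_cliqueCocliqueCovers hS)) ?_
        calc D.ncard ≤ _ := ncard_le_ncard hD
          _ ≤ _ + 1 := ncard_insert_le _ _
          _ = 2 := by rw [ncard_singleton]

theorem ncard_cliqueCocliqueCovers_le (hS : S.Finite) :
    (G.cliqueCocliqueCovers S).ncard ≤ 2 * S.ncard + 1 := by
  induction S, hS using Set.Finite.induction_on with
  | empty => simp [cliqueCocliqueCovers_empty]
  | @insert v S hv hS ih =>
    rw [ncard_insert_of_notMem hv hS]
    linarith [ncard_cliqueCocliqueCovers_insert_le (G := G) hS hv]

end SimpleGraph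

/-- For any subset `S` of the vertices of a finite graph, the number of pairs
`(X,Y)` of subsets of `S` with `X ∪ Y = S`, `X` a clique and `Y` a coclique is
at most `2|S| + 1`. -/
theorem card_clique_coclique_covers_le {V : Type} [Fintype V]
    (G : SimpleGraph V) (S : Set V) :
    {p : Set V × Set V | p.1 ⊆ S ∧ p.2 ⊆ S ∧ p.1 ∪ p.2 = S ∧
        G.IsClique p.1 ∧ p.2.Pairwise fun u v => ¬ G.Adj u v}.ncard
      ≤ 2 * S.ncard + 1 := by
  have hcovers : {p : Set V × Set V | p.1 ⊆ S ∧ p.2 ⊆ S ∧ p.1 ∪ p.2 = S ∧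
      G.IsClique p.1 ∧ p.2.Pairwise fun u v => ¬ G.Adj u v} = G.cliqueCocliqueCovers S :=
    ext fun _ => ⟨fun h => h.2.2, fun h => ⟨h.1 ▸ subset_union_left, h.1 ▸ subset_union_right, h⟩⟩
  rw [hcovers]
  exact SimpleGraph.ncard_cliqueCocliqueCovers_le S.toFinite
end

section
/- Let (V,E) be a finite simple graph with |V| = n. Then the product of the number of cliques of G with the number of cocliques of G is at most (n+1) · 2^n. -/
/-!
Group the pairs `(C, I)` of a clique and a coclique by `S = C ∪ I`; as `|C ∩ I| ≤ 1` there are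
two kinds. Either `(C, I)` is a split partition of `G[S]`, and `G[S]` has at most `|S| + 1` of
those: adding a vertex `v` to `S` creates at most one new split partition, since a clique `D` for
which both `D` and `D ∪ {v}` split is forced to be the neighbourhood of `v`. Or `C ∩ I = {v}`,
and then `v` determines `C = {v} ∪ (N(v) ∩ S)` and `I = S \ N(v)`. So each `S` carries at most
`2|S| + 1` pairs, and `∑_S (2|S| + 1) = (n + 1) 2^n` by pairing `S` with its complement.
-/

open Finset

theorem ncard_setOf_eq_card_finset_filter {V : Type*} [Fintype V] (p : Set V → Prop)
    [DecidablePred fun A : Finset V => p A] :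
    {X : Set V | p X}.ncard = #{A : Finset V | p A} := by
  rw [← Nat.card_coe_set_eq, ← Fintype.card_subtype, ← Nat.card_eq_fintype_card]
  exact Nat.card_congr (Fintype.finsetEquivSet.subtypeEquiv fun _ => Iff.rfl).symm

theorem Finset.sum_two_mul_card_add_one {V : Type*} [Fintype V] :
    ∑ S : Finset V, (2 * #S + 1) = (Fintype.card V + 1) * 2 ^ Fintype.card V := by
  classical
  have hcompl : ∑ S : Finset V, #S = ∑ S : Finset V, #Sᶜ :=
    (Fintype.sum_equiv (compl_involutive.toPerm _) _ _ fun _ => rfl).symm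
  calc ∑ S : Finset V, (2 * #S + 1) = ∑ S : Finset V, (#S + #Sᶜ + 1) := by
        rw [sum_add_distrib, sum_add_distrib, sum_add_distrib, ← hcompl, ← mul_sum]; ring
    _ = (Fintype.card V + 1) * 2 ^ Fintype.card V := by
        simp only [card_add_card_compl, sum_const, card_univ, Fintype.card_finset, smul_eq_mul]
        ring

namespace SimpleGraph

variable {V : Type*} [DecidableEq V] (G : SimpleGraph V) [DecidableRel G.Adj]

/-- The clique parts `C` of the split partitions `(C, S \ C)` of `G[S]`. -/
def splitCliques (S : Finset V) : Finset (Finset V) :=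
  {C ∈ S.powerset | G.IsClique (C : Set V) ∧ G.IsIndepSet ((S \ C : Finset V) : Set V)}

variable {G}

theorem mem_splitCliques {S C : Finset V} :
    C ∈ G.splitCliques S ↔
      C ⊆ S ∧ G.IsClique (C : Set V) ∧ G.IsIndepSet ((S \ C : Finset V) : Set V) := by
  rw [splitCliques, mem_filter, mem_powerset]

theorem splitCliques_empty : G.splitCliques ∅ = {∅} := by
  ext C
  simp +contextual [mem_splitCliques]

theorem erase_mem_splitCliques {S C : Finset V} {v : V} (hv : v ∉ S)
    (hC : C ∈ G.splitCliques (insert v S)) : C.erase v ∈ G.splitCliques S := by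
  obtain ⟨hCS, hclique, hindep⟩ := mem_splitCliques.1 hC
  refine mem_splitCliques.2 ⟨subset_insert_iff.1 hCS, hclique.subset (by simp), hindep.mono ?_⟩
  intro u hu
  simp only [coe_sdiff, Set.mem_sdiff, mem_coe, mem_erase, not_and] at hu ⊢
  exact ⟨mem_insert_of_mem hu.1, fun huC => hu.2 (ne_of_mem_of_not_mem hu.1 hv) huC⟩

theorem eq_filter_adj_of_insert_mem_splitCliques {S D : Finset V} {v : V} (hvD : v ∉ D)
    (hD : D ∈ G.splitCliques (insert v S)) (hvD' : insert v D ∈ G.splitCliques (insert v S)) :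
    D = {u ∈ S | G.Adj v u} := by
  obtain ⟨hDS, -, hindep⟩ := mem_splitCliques.1 hD
  obtain ⟨-, hclique, -⟩ := mem_splitCliques.1 hvD'
  ext u
  rw [mem_filter]
  constructor
  · intro hu
    have huv : u ≠ v := ne_of_mem_of_not_mem hu hvD
    exact ⟨(mem_insert.1 (hDS hu)).resolve_left huv,
      hclique (by simp) (by simp [hu]) huv.symm⟩
  · rintro ⟨huS, hadj⟩
    by_contra huD
    exact hindep (by simp [hvD]) (by simp [huS, huD]) hadj.ne hadj

theorem card_splitCliques_insert_le {S : Finset V} {v : V} (hv : v ∉ S) :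
    #(G.splitCliques (insert v S)) ≤ #(G.splitCliques S) + 1 := by
  set F := G.splitCliques (insert v S)
  set N : Finset V := {u ∈ S | G.Adj v u}
  have collision {C₁ C₂ : Finset V} (h₁ : C₁ ∈ F) (h₂ : C₂ ∈ F) (hv₁ : v ∈ C₁) (hv₂ : v ∉ C₂)
      (h : C₁.erase v = C₂.erase v) : C₁ = insert v N := by
    rw [erase_eq_of_notMem hv₂] at h
    rw [← insert_erase hv₁, h] at h₁ ⊢
    rw [eq_filter_adj_of_insert_mem_splitCliques hv₂ h₂ h₁]
  have hinj : Set.InjOn (fun C : Finset V => C.erase v) ↑(F.erase (insert v N)) := by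
    intro C₁ hC₁ C₂ hC₂ h
    simp only [coe_erase, Set.mem_sdiff, mem_coe, Set.mem_singleton_iff] at hC₁ hC₂
    by_cases hv₁ : v ∈ C₁ <;> by_cases hv₂ : v ∈ C₂
    · rw [← insert_erase hv₁, ← insert_erase hv₂]
      exact congrArg (insert v) h
    · exact absurd (collision hC₁.1 hC₂.1 hv₁ hv₂ h) hC₁.2
    · exact absurd (collision hC₂.1 hC₁.1 hv₂ hv₁ h.symm) hC₂.2
    · simpa only [erase_eq_of_notMem hv₁, erase_eq_of_notMem hv₂] using h
  calc #F ≤ #(F.erase (insert v N)) + 1 := Nat.sub_le_iff_le_add.1 pred_card_le_card_erase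
    _ ≤ #(G.splitCliques S) + 1 := by
      gcongr 1
      exact card_le_card_of_injOn _
        (fun C hC => erase_mem_splitCliques hv (mem_of_mem_erase hC)) hinj

theorem card_splitCliques_le (S : Finset V) : #(G.splitCliques S) ≤ #S + 1 := by
  induction S using Finset.induction_on with
  | empty => simp [splitCliques_empty]
  | insert v S hv ih =>
    rw [card_insert_of_notMem hv]
    exact (card_splitCliques_insert_le hv).trans (by omega)

theorem IsClique.eq_filter_adj_of_mem_isIndepSet {C I : Finset V} {v : V} (hC : G.IsClique (C : Set V))
    (hI : G.IsIndepSet (I : Set V)) (hvC : v ∈ C) (hvI : v ∈ I) :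
    C = {u ∈ C ∪ I | u = v ∨ G.Adj v u} ∧ I = {u ∈ C ∪ I | ¬ G.Adj v u} := by
  have adj_of_mem_C {u} (hu : u ∈ C) (huv : u ≠ v) : G.Adj v u := hC hvC hu huv.symm
  have not_adj_of_mem_I {u} (hu : u ∈ I) : ¬ G.Adj v u := fun hadj => hI hvI hu hadj.ne hadj
  constructor <;> ext u <;> simp only [mem_filter, mem_union]
  · refine ⟨fun hu => ⟨.inl hu, or_iff_not_imp_left.2 (adj_of_mem_C hu)⟩, ?_⟩
    rintro ⟨hu | hu, rfl | hadj⟩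
    exacts [hu, hu, hvC, absurd hadj (not_adj_of_mem_I hu)]
  · refine ⟨fun hu => ⟨.inr hu, not_adj_of_mem_I hu⟩, ?_⟩
    rintro ⟨hu | hu, hadj⟩
    · by_contra huI
      exact hadj (adj_of_mem_C hu (ne_of_mem_of_not_mem hvI huI).symm)
    · exact hu

variable [Fintype V]

theorem card_cliqueIndepSetPairs_with_union_le (S : Finset V) :
    #{p ∈ ({C | G.IsClique (C : Set V)} : Finset (Finset V)) ×ˢ
        ({I | G.IsIndepSet (I : Set V)} : Finset (Finset V)) | p.1 ∪ p.2 = S} ≤ 2 * #S + 1 := by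
  have hsub : {p ∈ ({C | G.IsClique (C : Set V)} : Finset (Finset V)) ×ˢ
      ({I | G.IsIndepSet (I : Set V)} : Finset (Finset V)) | p.1 ∪ p.2 = S} ⊆
        (G.splitCliques S).image (fun C => (C, S \ C)) ∪
          S.image fun v => ({u ∈ S | u = v ∨ G.Adj v u}, {u ∈ S | ¬ G.Adj v u}) := by
    rintro ⟨C, I⟩ hp
    simp only [mem_filter, mem_product, mem_univ, true_and] at hp
    obtain ⟨⟨hC, hI⟩, rfl⟩ := hp
    rcases disjoint_or_nonempty_inter C I with hdisj | ⟨v, hv⟩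
    · have hI_eq : (C ∪ I) \ C = I := by
        rw [union_sdiff_left, sdiff_eq_self_of_disjoint hdisj.symm]
      exact mem_union_left _ (mem_image.2
        ⟨C, mem_splitCliques.2 ⟨subset_union_left, hC, by rwa [hI_eq]⟩, by rw [hI_eq]⟩)
    · obtain ⟨hvC, hvI⟩ := mem_inter.1 hv
      obtain ⟨hC_eq, hI_eq⟩ := hC.eq_filter_adj_of_mem_isIndepSet hI hvC hvI
      exact mem_union_right _ (mem_image.2 ⟨v, mem_union_left _ hvC, by rw [← hC_eq, ← hI_eq]⟩)
  calc _ ≤ _ := card_le_card hsub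
    _ ≤ #(G.splitCliques S) + #S :=
      (card_union_le _ _).trans (add_le_add card_image_le card_image_le)
    _ ≤ 2 * #S + 1 := by have := card_splitCliques_le (G := G) S; omega

end SimpleGraph

/-- In any graph with `n` vertices, the product of the number of cliques with
the number of cocliques is at most `(n+1) · 2^n`. -/
theorem cliques_mul_cocliques_le {V : Type} [Fintype V] (G : SimpleGraph V) :
    {X : Set V | G.IsClique X}.ncard *
      {Y : Set V | Y.Pairwise fun u v => ¬ G.Adj u v}.ncard
      ≤ (Fintype.card V + 1) * 2 ^ Fintype.card V := by
  classical
  change {X : Set V | G.IsClique X}.ncard * {Y : Set V | G.IsIndepSet Y}.ncard ≤ _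
  rw [ncard_setOf_eq_card_finset_filter, ncard_setOf_eq_card_finset_filter, ← card_product,
    card_eq_sum_card_fiberwise (f := fun p => p.1 ∪ p.2) (t := univ) fun _ _ => mem_univ _,
    ← sum_two_mul_card_add_one]
  exact sum_le_sum fun S _ => G.card_cliqueIndepSetPairs_with_union_le S
end

section
/- Any finite simple graph with n vertices has at most √(n+1) · 2^(n/2) cliques or at most √(n+1) · 2^(n/2) cocliques; i.e., the minimum of the number of cliques and the number of cocliques, viewed as a real number, is at most √(n+1) · 2^(n/2). -/
/-!
Let `c(s)` and `c̄(s)` count the cliques of `G` and of its complement inside a vertex set `s`.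
Adding a vertex `v` to `t` gives `c(t + v) = c(t) + c(N)` and `c̄(t + v) = c̄(t) + c̄(M)`, where `N`
and `M` are the neighbours and non-neighbours of `v` in `t`. As `N` and `M` are disjoint,
`c(N) c̄(M) ≤ 2^|N| 2^|M| ≤ 2^|t|`, and the rearrangement inequality bounds the product
`c(t + v) c̄(t + v)` by `2 (c(t) c̄(t) + c(N) c̄(M))`. By induction `c(V) c̄(V) ≤ (n + 1) 2^n`, and
the smaller of two numbers is at most the square root of their product.
-/

open Finset

theorem add_mul_add_le_two_mul_add_mul {R : Type*} [CommSemiring R] [PartialOrder R]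
    [IsOrderedCancelAddMonoid R] [IsOrderedRing R] [ExistsAddOfLE R] {a a' b b' : R}
    (ha : a' ≤ a) (hb : b' ≤ b) : (a + a') * (b + b') ≤ 2 * (a * b + a' * b') :=
  calc (a + a') * (b + b') = a * b + (a' * b + a * b') + a' * b' := by ring
    _ ≤ a * b + (a' * b' + a * b) + a' * b' :=
      add_le_add_left (add_le_add_right (mul_add_mul_le_mul_add_mul ha hb) _) _
    _ = 2 * (a * b + a' * b') := by ring

namespace SimpleGraph

variable {V : Type*} [DecidableEq V] (G : SimpleGraph V) [DecidableRel G.Adj]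

def cliquesIn (s : Finset V) : Finset (Finset V) :=
  {X ∈ s.powerset | G.IsClique (X : Set V)}

variable {G} in
@[simp]
theorem mem_cliquesIn {s X : Finset V} : X ∈ G.cliquesIn s ↔ X ⊆ s ∧ G.IsClique (X : Set V) := by
  rw [cliquesIn, mem_filter, mem_powerset]

theorem cliquesIn_insert {v : V} {t : Finset V} (hv : v ∉ t) :
    G.cliquesIn (insert v t) =
      G.cliquesIn t ∪ (G.cliquesIn {u ∈ t | G.Adj v u}).image (insert v) := by
  rw [cliquesIn, powerset_insert, filter_union, filter_image]
  congr 2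
  ext X
  simp only [cliquesIn, mem_filter, mem_powerset, coe_insert, isClique_insert, subset_iff]
  grind

theorem card_cliquesIn_insert {v : V} {t : Finset V} (hv : v ∉ t) :
    #(G.cliquesIn (insert v t)) = #(G.cliquesIn t) + #(G.cliquesIn {u ∈ t | G.Adj v u}) := by
  have notMem {X : Finset V} (hX : X ∈ G.cliquesIn {u ∈ t | G.Adj v u}) : v ∉ X :=
    fun h => hv (mem_filter.1 ((mem_cliquesIn.1 hX).1 h)).1
  rw [G.cliquesIn_insert hv, card_union_of_disjoint, card_image_of_injOn]
  · intro X hX Y hY hXY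
    rw [← erase_insert (notMem hX), ← erase_insert (notMem hY), hXY]
  · rw [disjoint_right]
    intro X hX hX'
    obtain ⟨Y, -, rfl⟩ := mem_image.1 hX
    exact hv ((mem_cliquesIn.1 hX').1 (mem_insert_self v Y))

theorem card_cliquesIn_mono {s t : Finset V} (h : s ⊆ t) :
    #(G.cliquesIn s) ≤ #(G.cliquesIn t) :=
  card_le_card (filter_subset_filter _ (powerset_mono.2 h))

theorem card_cliquesIn_le (s : Finset V) : #(G.cliquesIn s) ≤ 2 ^ #s :=
  (card_filter_le _ _).trans (card_powerset s).le

theorem card_cliquesIn_mul_card_cliquesIn_compl_le (s : Finset V) :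
    #(G.cliquesIn s) * #(Gᶜ.cliquesIn s) ≤ (#s + 1) * 2 ^ #s := by
  induction s using Finset.induction_on with
  | empty => simp [cliquesIn, filter_singleton]
  | insert v t hv ih =>
    set N := {u ∈ t | G.Adj v u}
    set M := {u ∈ t | Gᶜ.Adj v u}
    have hcardNM : #N + #M ≤ #t :=
      calc #N + #M ≤ #N + #{u ∈ t | ¬G.Adj v u} := by
            gcongr
            exact monotone_filter_right t fun _ _ h => ((compl_adj G v _).1 h).2
        _ = #t := card_filter_add_card_filter_not _
    have hcliquesNM : #(G.cliquesIn N) * #(Gᶜ.cliquesIn M) ≤ 2 ^ #t :=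
      calc #(G.cliquesIn N) * #(Gᶜ.cliquesIn M) ≤ 2 ^ #N * 2 ^ #M := by
            gcongr <;> apply card_cliquesIn_le
        _ ≤ 2 ^ #t := by rw [← pow_add]; exact Nat.pow_le_pow_right two_pos hcardNM
    rw [G.card_cliquesIn_insert hv, Gᶜ.card_cliquesIn_insert hv, card_insert_of_notMem hv]
    calc _ ≤ 2 * (#(G.cliquesIn t) * #(Gᶜ.cliquesIn t) + #(G.cliquesIn N) * #(Gᶜ.cliquesIn M)) :=
          add_mul_add_le_two_mul_add_mul (G.card_cliquesIn_mono (filter_subset _ _))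
            (Gᶜ.card_cliquesIn_mono (filter_subset _ _))
      _ ≤ 2 * ((#t + 1) * 2 ^ #t + 2 ^ #t) := by gcongr
      _ = (#t + 1 + 1) * 2 ^ (#t + 1) := by ring

theorem ncard_setOf_isClique [Fintype V] :
    {X : Set V | G.IsClique X}.ncard = #(G.cliquesIn univ) := by
  rw [← Set.ncard_coe_finset, ← Set.ncard_image_of_injective _ coe_injective]
  congr 1
  ext X
  simp only [Set.mem_ofPred_eq, Set.mem_image, mem_coe, mem_cliquesIn, subset_univ, true_and]
  exact ⟨fun h => ⟨X.toFinite.toFinset, by simpa, X.toFinite.coe_toFinset⟩,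
    by rintro ⟨s, hs, rfl⟩; exact hs⟩

end SimpleGraph

theorem Real.min_le_sqrt_mul {a b : ℝ} (ha : 0 ≤ a) (hb : 0 ≤ b) : min a b ≤ √(a * b) :=
  Real.le_sqrt_of_sq_le <| by
    rw [sq]; exact mul_le_mul (min_le_left _ _) (min_le_right _ _) (le_min ha hb) ha

theorem Real.sqrt_two_pow (n : ℕ) : √(2 ^ n) = 2 ^ ((n : ℝ) / 2) := by
  rw [Real.sqrt_eq_rpow, ← Real.rpow_natCast, ← Real.rpow_mul zero_le_two, mul_one_div]

/-- Any graph with `n` vertices has at most `√(n+1) · 2^(n/2)` cliques or at most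
`√(n+1) · 2^(n/2)` cocliques. -/
theorem min_cliques_cocliques_le {V : Type} [Fintype V] (G : SimpleGraph V) :
    min ({X : Set V | G.IsClique X}.ncard : ℝ)
        ({Y : Set V | Y.Pairwise fun u v => ¬ G.Adj u v}.ncard : ℝ)
      ≤ Real.sqrt (Fintype.card V + 1) * 2 ^ ((Fintype.card V : ℝ) / 2) := by
  classical
  have hcocliques : {Y : Set V | Y.Pairwise fun u v => ¬ G.Adj u v} = {Y | Gᶜ.IsClique Y} := by
    simp_rw [SimpleGraph.isClique_compl]
  have hprod := G.card_cliquesIn_mul_card_cliquesIn_compl_le univ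
  rw [card_univ] at hprod
  rw [hcocliques, G.ncard_setOf_isClique, Gᶜ.ncard_setOf_isClique]
  calc _ ≤ √((#(G.cliquesIn univ) : ℝ) * #(Gᶜ.cliquesIn univ)) :=
        Real.min_le_sqrt_mul (Nat.cast_nonneg _) (Nat.cast_nonneg _)
    _ ≤ √((Fintype.card V + 1) * 2 ^ Fintype.card V) :=
        Real.sqrt_le_sqrt (by exact_mod_cast hprod)
    _ = _ := by rw [Real.sqrt_mul (by positivity), Real.sqrt_two_pow]
end

section
/- For every n ≥ 0 there exists a finite simple graph with n vertices that has at least (1/2) · √(n+1) · 2^(n/2) cliques and at least (1/2) · √(n+1) · 2^(n/2) cocliques. -/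
/-!
Take `a + b = n` and the disjoint union of a complete graph on `a` vertices with `b` isolated
vertices. Every subset of the complete part is a clique, so there are at least `2 ^ a` cliques; a
coclique is any set meeting the complete part in at most one vertex, so there are
`(a + 1) * 2 ^ b` cocliques. Squaring, both counts beat the bound once `(n + 1) * 2 ^ n` is at most
`4 * 4 ^ a` and at most `4 * (a + 1) ^ 2 * 4 ^ b`. The least `a` satisfying the first inequality
also satisfies the second: minimality gives `4 ^ a ≤ (n + 1) * 2 ^ n`, and the first inequality
forces `n + 1 ≤ 2 * (a + 1)`.
-/

namespace Set

variable {α β : Type*}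

theorem ncard_setOf_subsingleton [Finite α] :
    {s : Set α | s.Subsingleton}.ncard = Nat.card α + 1 := by
  have hsplit : {s : Set α | s.Subsingleton} = insert ∅ (range singleton) := by
    ext s
    refine ⟨fun hs => ?_, ?_⟩
    · obtain rfl | ⟨a, rfl⟩ := hs.eq_empty_or_singleton
      exacts [mem_insert _ _, mem_insert_of_mem _ (mem_range_self a)]
    · rintro (rfl | ⟨a, rfl⟩)
      exacts [subsingleton_empty, subsingleton_singleton]
  have hempty : ∅ ∉ range (singleton : α → Set α) := fun ⟨a, ha⟩ => singleton_ne_empty a ha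
  rw [hsplit, ncard_insert_of_notMem hempty, ncard_range_of_injective singleton_injective]

theorem ncard_setOf_image_equiv (e : α ≃ β) (P : Set β → Prop) :
    {s : Set α | P (e '' s)}.ncard = {t | P t}.ncard :=
  ncard_preimage_of_injective_subset_range (image_injective.2 e.injective)
    (by rw [(image_surjective.2 e.surjective).range_eq]; exact subset_univ _)

end Set

namespace SimpleGraph

variable {V W : Type*}

theorem isClique_comap_iff {G : SimpleGraph W} {f : V → W} (hf : f.Injective) {s : Set V} :
    (G.comap f).IsClique s ↔ G.IsClique (f '' s) :=
  (hf.injOn.pairwise_image).symm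

theorem isIndepSet_comap_iff {G : SimpleGraph W} {f : V → W} (hf : f.Injective) {s : Set V} :
    (G.comap f).IsIndepSet s ↔ G.IsIndepSet (f '' s) :=
  (hf.injOn.pairwise_image (r := fun u v => ¬ G.Adj u v)).symm

theorem ncard_setOf_isClique_comap_equiv (G : SimpleGraph W) (e : V ≃ W) :
    {s | (G.comap e).IsClique s}.ncard = {t | G.IsClique t}.ncard := by
  simp only [isClique_comap_iff e.injective]
  exact Set.ncard_setOf_image_equiv e _

theorem ncard_setOf_isIndepSet_comap_equiv (G : SimpleGraph W) (e : V ≃ W) :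
    {s | (G.comap e).IsIndepSet s}.ncard = {t | G.IsIndepSet t}.ncard := by
  simp only [isIndepSet_comap_iff e.injective]
  exact Set.ncard_setOf_image_equiv e _

theorem ncard_setOf_isClique_top [Finite V] :
    {s | (⊤ : SimpleGraph V).IsClique s}.ncard = 2 ^ Nat.card V := by
  simp [IsClique.top, ← Set.powerset_univ]

theorem ncard_setOf_isIndepSet_bot [Finite V] :
    {s | (⊥ : SimpleGraph V).IsIndepSet s}.ncard = 2 ^ Nat.card V := by
  simp [← isClique_compl, IsClique.top, ← Set.powerset_univ]

theorem ncard_setOf_isIndepSet_top [Finite V] :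
    {s | (⊤ : SimpleGraph V).IsIndepSet s}.ncard = Nat.card V + 1 := by
  simp only [← isClique_compl, compl_top, isClique_bot_iff]
  exact Set.ncard_setOf_subsingleton

theorem isClique_sum_image_inl_iff {G : SimpleGraph V} {H : SimpleGraph W} {s : Set V} :
    (G ⊕g H).IsClique (Sum.inl '' s) ↔ G.IsClique s :=
  Sum.inl_injective.injOn.pairwise_image

theorem ncard_setOf_isClique_le_sum [Finite V] [Finite W] (G : SimpleGraph V)
    (H : SimpleGraph W) :
    {s | G.IsClique s}.ncard ≤ {t | (G ⊕g H).IsClique t}.ncard :=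
  Set.ncard_le_ncard_of_injOn (Set.image Sum.inl) (fun _ hs => isClique_sum_image_inl_iff.2 hs)
    (Set.image_injective.2 Sum.inl_injective).injOn

theorem isIndepSet_sum_iff {G : SimpleGraph V} {H : SimpleGraph W} {t : Set (V ⊕ W)} :
    (G ⊕g H).IsIndepSet t ↔ G.IsIndepSet (Sum.inl ⁻¹' t) ∧ H.IsIndepSet (Sum.inr ⁻¹' t) := by
  refine ⟨fun ht => ⟨fun u hu v hv huv => ht hu hv (by simpa),
    fun u hu v hv huv => ht hu hv (by simpa)⟩, ?_⟩
  rintro ⟨hG, hH⟩ (u | u) hu (v | v) hv huv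
  · exact hG hu hv (by simpa using huv)
  · simp
  · simp
  · exact hH hu hv (by simpa using huv)

theorem ncard_setOf_isIndepSet_sum (G : SimpleGraph V) (H : SimpleGraph W) :
    {t | (G ⊕g H).IsIndepSet t}.ncard =
      {s | G.IsIndepSet s}.ncard * {s | H.IsIndepSet s}.ncard := by
  have hprod : {t | (G ⊕g H).IsIndepSet t} =
      Set.sumEquiv ⁻¹' ({s | G.IsIndepSet s} ×ˢ {s | H.IsIndepSet s}) := by
    ext t; simp [isIndepSet_sum_iff]
  rw [hprod, ← Set.ncard_prod]
  exact Set.ncard_preimage_of_injective_subset_range Set.sumEquiv.injective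
    (by simp [Set.sumEquiv.surjective.range_eq])

end SimpleGraph

theorem exists_add_eq_and_le_four_mul_sq (n : ℕ) :
    ∃ a b, a + b = n ∧ (n + 1) * 2 ^ n ≤ 4 * (2 ^ a) ^ 2 ∧
      (n + 1) * 2 ^ n ≤ 4 * ((a + 1) * 2 ^ b) ^ 2 := by
  set N := (n + 1) * 2 ^ n
  have hn : N ≤ 4 * (2 ^ n) ^ 2 :=
    calc N ≤ 2 ^ n * 2 ^ n := Nat.mul_le_mul_right _ Nat.lt_two_pow_self
      _ ≤ 4 * (2 ^ n) ^ 2 := by rw [← sq]; omega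
  have hex : ∃ a, N ≤ 4 * (2 ^ a) ^ 2 := ⟨n, hn⟩
  set a := Nat.find hex
  have ha : N ≤ 4 * (2 ^ a) ^ 2 := Nat.find_spec hex
  have han : a ≤ n := Nat.find_min' hex hn
  have ha_sq : (2 ^ a) ^ 2 ≤ N := by
    rcases a.eq_zero_or_pos with h0 | hpos
    · rw [h0]; exact Nat.mul_pos n.succ_pos (by positivity)
    · obtain ⟨k, hk⟩ := Nat.exists_eq_add_one_of_ne_zero hpos.ne'
      have hmin := Nat.find_min hex (show k < a by omega)
      rw [hk, show (2 ^ (k + 1)) ^ 2 = 4 * (2 ^ k) ^ 2 by ring]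
      omega
  have h2a : n + 1 ≤ 2 * (a + 1) := by
    rcases Nat.eq_zero_or_pos n with rfl | hpos
    · omega
    have : 2 ^ (n + 1) ≤ 2 ^ (2 * (a + 1)) :=
      calc 2 ^ (n + 1) = 2 * 2 ^ n := by ring
        _ ≤ N := Nat.mul_le_mul_right _ (by omega)
        _ ≤ 4 * (2 ^ a) ^ 2 := ha
        _ = 2 ^ (2 * (a + 1)) := by ring
    have := (Nat.pow_le_pow_iff_right (by norm_num : 1 < 2)).mp this
    omega
  refine ⟨a, n - a, by omega, ha,
    Nat.le_of_mul_le_mul_right (c := (2 ^ a) ^ 2) ?_ (by positivity)⟩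
  have hpow : 2 ^ n = 2 ^ (n - a) * 2 ^ a := by rw [← pow_add, Nat.sub_add_cancel han]
  calc N * (2 ^ a) ^ 2 ≤ N * N := Nat.mul_le_mul_left _ ha_sq
    _ = (n + 1) ^ 2 * (2 ^ n) ^ 2 := by ring
    _ ≤ (2 * (a + 1)) ^ 2 * (2 ^ n) ^ 2 := by gcongr
    _ = 4 * ((a + 1) * 2 ^ (n - a)) ^ 2 * (2 ^ a) ^ 2 := by rw [hpow]; ring

theorem half_sqrt_mul_two_rpow_le {n m : ℕ} (h : (n + 1) * 2 ^ n ≤ 4 * m ^ 2) :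
    (1 / 2 : ℝ) * Real.sqrt (n + 1) * 2 ^ ((n : ℝ) / 2) ≤ m := by
  have hpow : (2 : ℝ) ^ ((n : ℝ) / 2) = Real.sqrt (2 ^ n) := by
    rw [Real.sqrt_eq_rpow, ← Real.rpow_natCast, ← Real.rpow_mul zero_le_two]
    ring_nf
  calc (1 / 2 : ℝ) * Real.sqrt (n + 1) * 2 ^ ((n : ℝ) / 2)
      = Real.sqrt ((n + 1) * 2 ^ n) / 2 := by rw [hpow, Real.sqrt_mul (by positivity)]; ring
    _ ≤ Real.sqrt (4 * m ^ 2) / 2 := by gcongr Real.sqrt ?_ / 2; exact_mod_cast h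
    _ = m := by
      rw [Real.sqrt_mul zero_le_four, Real.sqrt_sq m.cast_nonneg,
        show (4 : ℝ) = 2 ^ 2 by norm_num, Real.sqrt_sq zero_le_two]
      ring

/-- For every `n ≥ 0` there is a graph with `n` vertices having at least
`(1/2) · √(n+1) · 2^(n/2)` cliques and at least that many cocliques. -/
theorem exists_graph_many_cliques_cocliques (n : ℕ) :
    ∃ G : SimpleGraph (Fin n),
      (1 / 2 : ℝ) * Real.sqrt (n + 1) * 2 ^ ((n : ℝ) / 2)
          ≤ ({X : Set (Fin n) | G.IsClique X}.ncard : ℝ) ∧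
      (1 / 2 : ℝ) * Real.sqrt (n + 1) * 2 ^ ((n : ℝ) / 2)
          ≤ ({Y : Set (Fin n) | Y.Pairwise fun u v => ¬ G.Adj u v}.ncard : ℝ) := by
  obtain ⟨a, b, rfl, hclique, hindep⟩ := exists_add_eq_and_le_four_mul_sq n
  let H : SimpleGraph (Fin a ⊕ Fin b) := ⊤ ⊕g ⊥
  refine ⟨H.comap finSumFinEquiv.symm, (half_sqrt_mul_two_rpow_le hclique).trans ?_,
    (half_sqrt_mul_two_rpow_le hindep).trans_eq ?_⟩
  · have hle := SimpleGraph.ncard_setOf_isClique_le_sum (⊤ : SimpleGraph (Fin a))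
      (⊥ : SimpleGraph (Fin b))
    rw [SimpleGraph.ncard_setOf_isClique_top, Nat.card_fin] at hle
    rw [SimpleGraph.ncard_setOf_isClique_comap_equiv]
    exact_mod_cast hle
  · change _ = (({Y | (H.comap _).IsIndepSet Y}.ncard : ℕ) : ℝ)
    rw [SimpleGraph.ncard_setOf_isIndepSet_comap_equiv, SimpleGraph.ncard_setOf_isIndepSet_sum,
      SimpleGraph.ncard_setOf_isIndepSet_top, SimpleGraph.ncard_setOf_isIndepSet_bot]
    simp
end

section
/- For every n ≥ 1, if k is an integer nearest to n/2 + (1/2)·log₂((n+1)/2), then 0 ≤ k ≤ n, and both 2^k ≥ (1/2)·√(n+1)·2^(n/2) and (k+1)·2^(n−k) ≥ (1/2)·√(n+1)·2^(n/2) hold. -/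
/-!
Write `ℓ = log₂((n+1)/2)`, so that `n + 1 = 2^(ℓ+1)`; since `1 ≤ n` and `n + 1 ≤ 2^n`,
`0 ≤ ℓ ≤ n - 1`, which puts `k` in `[0, n]`. Then the common lower bound is an exact
power of two, `(1/2)·√(n+1)·2^(n/2) = 2^(n/2 + ℓ/2 - 1/2)`, and the nearest-integer condition
`k ≥ n/2 + ℓ/2 - 1/2` gives the first inequality at once. Splitting the same power as
`2^ℓ · 2^(n/2 - ℓ/2 - 1/2)` gives the second: `2^ℓ = (n+1)/2 ≤ k + 1` because `ℓ ≥ 0`,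
and `n/2 - ℓ/2 - 1/2 ≤ n - k` because `k ≤ n/2 + ℓ/2 + 1/2`.
-/

open Real

lemma sqrt_two_rpow (y : ℝ) : √(2 ^ y) = 2 ^ (y / 2) := by
  rw [sqrt_eq_rpow, ← rpow_mul zero_le_two]
  ring_nf

lemma half_mul_sqrt_succ_mul_two_rpow {m : ℝ} (hm : -1 < m) :
    (1 / 2) * √(m + 1) * 2 ^ (m / 2) = (2 : ℝ) ^ (m / 2 + logb 2 ((m + 1) / 2) / 2 - 1 / 2) := by
  set ℓ := logb 2 ((m + 1) / 2)
  have hsucc : m + 1 = 2 ^ (ℓ + 1) := by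
    rw [rpow_add_one two_ne_zero, rpow_logb zero_lt_two one_lt_two.ne' (by linarith)]
    ring
  rw [hsucc, sqrt_two_rpow, one_div, ← rpow_neg_one, ← rpow_add zero_lt_two,
    ← rpow_add zero_lt_two]
  ring_nf

lemma logb_two_half_succ_le (n : ℕ) : logb 2 ((n + 1 : ℝ) / 2) ≤ n - 1 := by
  have hpow : ((n : ℝ) + 1) / 2 ≤ 2 ^ ((n : ℝ) - 1) := by
    have : (n : ℝ) + 1 ≤ 2 ^ n := by exact_mod_cast Nat.lt_two_pow_self
    rw [rpow_sub_one two_ne_zero, rpow_natCast]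
    linarith
  calc logb 2 ((n + 1 : ℝ) / 2) ≤ logb 2 (2 ^ ((n : ℝ) - 1)) :=
        logb_le_logb_of_le one_lt_two (by positivity) hpow
    _ = n - 1 := logb_rpow zero_lt_two one_lt_two.ne'

lemma two_rpow_le_mul_two_rpow_sub {m ℓ κ : ℝ} (hℓ : 2 ^ ℓ ≤ κ + 1)
    (hκ : κ ≤ m / 2 + ℓ / 2 + 1 / 2) :
    (2 : ℝ) ^ (m / 2 + ℓ / 2 - 1 / 2) ≤ (κ + 1) * 2 ^ (m - κ) := by
  calc (2 : ℝ) ^ (m / 2 + ℓ / 2 - 1 / 2) = 2 ^ ℓ * 2 ^ (m / 2 - ℓ / 2 - 1 / 2) := by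
        rw [← rpow_add zero_lt_two]
        ring_nf
    _ ≤ (κ + 1) * 2 ^ (m - κ) :=
        mul_le_mul hℓ (rpow_le_rpow_of_exponent_le one_le_two (by linarith)) (by positivity)
          ((rpow_pos_of_pos zero_lt_two ℓ).le.trans hℓ)

/-- For `n ≥ 1`, if `k` is an integer nearest to `n/2 + (1/2)·log₂((n+1)/2)`,
then `0 ≤ k ≤ n`, `2^k ≥ (1/2)·√(n+1)·2^(n/2)`, and
`(k+1)·2^(n-k) ≥ (1/2)·√(n+1)·2^(n/2)`. -/
theorem nearest_integer_bounds (n : ℕ) (hn : 1 ≤ n) (k : ℤ)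
    (hk : |(k : ℝ) - ((n : ℝ) / 2 + (1 / 2) * Real.logb 2 ((n + 1) / 2))| ≤ 1 / 2) :
    0 ≤ k ∧ k ≤ n ∧
    (1 / 2 : ℝ) * Real.sqrt (n + 1) * 2 ^ ((n : ℝ) / 2) ≤ (2 : ℝ) ^ k ∧
    (1 / 2 : ℝ) * Real.sqrt (n + 1) * 2 ^ ((n : ℝ) / 2)
      ≤ ((k : ℝ) + 1) * (2 : ℝ) ^ ((n : ℤ) - k) := by
  set ℓ := logb 2 ((n + 1 : ℝ) / 2) with hℓ
  have hℓ₀ : 0 ≤ ℓ := logb_nonneg one_lt_two (by rw [le_div_iff₀ two_pos]; norm_cast; omega)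
  have hℓn : ℓ ≤ n - 1 := logb_two_half_succ_le n
  obtain ⟨hk₁, hk₂⟩ := abs_le.mp hk
  rw [half_mul_sqrt_succ_mul_two_rpow (neg_one_lt_zero.trans_le n.cast_nonneg), ← hℓ]
  refine ⟨by exact_mod_cast (by linarith : (0 : ℝ) ≤ k),
    by exact_mod_cast (by linarith : (k : ℝ) ≤ n), ?_, ?_⟩
  · rw [← rpow_intCast]
    exact rpow_le_rpow_of_exponent_le one_le_two (by linarith)
  · rw [← rpow_intCast, Int.cast_sub, Int.cast_natCast]
    refine two_rpow_le_mul_two_rpow_sub ?_ (by linarith)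
    rw [rpow_logb zero_lt_two one_lt_two.ne' (by positivity)]
    linarith
end

section
/- For every n ≥ 0 there exists a UFA with n states (over some finite alphabet) such that both its forward determinization and its backward determinization have at least (1/2) · √(n+1) · 2^(n/2) states. -/
/-! The witness has states `α ⊕ β` and a hub `x₀ ∈ α`, its only initial and only accepting state.
A letter `inl S` leads from the hub to every state of `S ⊆ α`; a letter `inr (o, T)` leads back to
the hub from every state of a set that meets `α` in at most the state `o`. Accepting runs stay in
`α`, where each letter has at most one source, so accepting runs agree from the end backwards.
The forward determinization contains all `2 ^ |α|` subsets of `α`, the backward one all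
`(|α| + 1) * 2 ^ |β|` sets meeting `α` in at most one state. Taking `|α| ≥ 1` least with
`(n + 1) * 2 ^ n ≤ 4 ^ (|α| + 1)`, both are at least `√((n + 1) * 2 ^ n) / 2`. -/

namespace NFA'

variable {Q A : Type} (M : NFA' Q A)

theorem steps_singleton {q q' : Q} {a : A} : M.Steps q [a] q' ↔ M.δ q a q' := by
  simp [Steps]

theorem setOf_delta_mem_fwdStates (a : A) : {r | ∃ q ∈ M.I, M.δ q a r} ∈ M.fwdStates :=
  ⟨[a], by simp only [steps_singleton]⟩

theorem setOf_delta_mem_bwdStates (a : A) : {r | ∃ q ∈ M.F, M.δ r a q} ∈ M.bwdStates :=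
  ⟨[a], by simp only [steps_singleton]⟩

theorem one_le_ncard_fwdStates [Finite Q] : 1 ≤ M.fwdStates.ncard :=
  (Set.ncard_pos (Set.toFinite _)).mpr ⟨_, [], rfl⟩

theorem one_le_ncard_bwdStates [Finite Q] : 1 ≤ M.bwdStates.ncard :=
  (Set.ncard_pos (Set.toFinite _)).mpr ⟨_, [], rfl⟩

theorem unambiguous_of_subsingleton [Subsingleton Q] : M.Unambiguous :=
  fun _ _ _ _ _ => Subsingleton.elim _ _

theorem IsAccRun.mem_of_invariant {X : Set Q} (hI : M.I ⊆ X)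
    (hX : ∀ q ∈ X, ∀ a q', M.δ q a q' → q' ∈ X) {w : List A} {r : Fin (w.length + 1) → Q}
    (hr : M.IsAccRun w r) (i : Fin (w.length + 1)) : r i ∈ X :=
  Fin.induction (hI hr.1) (fun i hi => hX _ hi _ _ (hr.2.2 i)) i

theorem unambiguous_of_coDeterministicOn {X : Set Q} (hI : M.I ⊆ X)
    (hX : ∀ q ∈ X, ∀ a q', M.δ q a q' → q' ∈ X)
    (hco : ∀ a q', {q ∈ X | M.δ q a q'}.Subsingleton) (hF : M.F.Subsingleton) :
    M.Unambiguous := by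
  intro w r r' hr hr'
  funext i
  induction i using Fin.reverseInduction with
  | last => exact hF hr.2.1 hr'.2.1
  | cast i ih =>
    refine hco (w.get i) (r i.succ) ⟨hr.mem_of_invariant M hI hX _, hr.2.2 i⟩
      ⟨hr'.mem_of_invariant M hI hX _, ?_⟩
    rw [ih]
    exact hr'.2.2 i

end NFA'

section Hub

variable {α β : Type}

def optionSumSet (o : Option α) (T : Set β) : Set (α ⊕ β) :=
  {q | Sum.elim (fun a => o = some a) (· ∈ T) q}

theorem optionSumSet_injective :
    Function.Injective (fun p : Option α × Set β => optionSumSet p.1 p.2) := by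
  rintro ⟨o, T⟩ ⟨o', T'⟩ h
  have hq := fun q => Set.ext_iff.mp h q
  simp only [optionSumSet, Set.mem_ofPred_eq] at hq
  simp only [Prod.mk.injEq]
  exact ⟨Option.ext fun a => hq (.inl a), Set.ext fun b => hq (.inr b)⟩

namespace NFA'

def hub (x₀ : α) : NFA' (α ⊕ β) (Set α ⊕ Option α × Set β) where
  δ q c q' := match c with
    | .inl S => q = .inl x₀ ∧ ∃ a ∈ S, q' = .inl a
    | .inr (o, T) => q ∈ optionSumSet o T ∧ q' = .inl x₀
  I := {.inl x₀}
  F := {.inl x₀}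

variable (x₀ : α)

theorem hub_unambiguous : (hub x₀ : NFA' (α ⊕ β) _).Unambiguous := by
  refine unambiguous_of_coDeterministicOn _ (X := Set.range Sum.inl) (by simp [hub]) ?_ ?_
    Set.subsingleton_singleton
  · rintro q - (S | ⟨o, T⟩) q' h
    · obtain ⟨-, a, -, rfl⟩ := h
      exact ⟨a, rfl⟩
    · exact ⟨x₀, h.2.symm⟩
  · rintro (S | ⟨o, T⟩) q'
    · rintro _ ⟨-, rfl, -⟩ _ ⟨-, rfl, -⟩
      rfl
    · rintro _ ⟨⟨a, rfl⟩, ha, -⟩ _ ⟨⟨a', rfl⟩, ha', -⟩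
      simp only [optionSumSet, Set.mem_ofPred_eq, Sum.elim_inl] at ha ha'
      exact congrArg Sum.inl (Option.some_inj.mp (ha.symm.trans ha'))

theorem image_inl_mem_hub_fwdStates (S : Set α) :
    Sum.inl '' S ∈ (hub x₀ : NFA' (α ⊕ β) _).fwdStates := by
  convert setOf_delta_mem_fwdStates (hub x₀) (.inl S) using 1
  ext q
  simp [hub, eq_comm]

theorem optionSumSet_mem_hub_bwdStates (o : Option α) (T : Set β) :
    optionSumSet o T ∈ (hub x₀).bwdStates := by
  convert setOf_delta_mem_bwdStates (hub x₀) (.inr (o, T)) using 1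
  ext q
  simp [hub]

theorem two_pow_card_le_ncard_hub_fwdStates [Fintype α] [Fintype β] :
    2 ^ Fintype.card α ≤ (hub x₀ : NFA' (α ⊕ β) _).fwdStates.ncard := by
  rw [← Fintype.card_set, ← Nat.card_eq_fintype_card,
    ← Set.ncard_range_of_injective (Set.image_injective.mpr Sum.inl_injective)]
  refine Set.ncard_le_ncard ?_ (Set.toFinite _)
  rintro _ ⟨S, rfl⟩
  exact image_inl_mem_hub_fwdStates x₀ S

theorem card_mul_two_pow_card_le_ncard_hub_bwdStates [Fintype α] [Fintype β] :
    (Fintype.card α + 1) * 2 ^ Fintype.card β ≤ (hub x₀ : NFA' (α ⊕ β) _).bwdStates.ncard := by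
  rw [← Fintype.card_option, ← Fintype.card_set, ← Fintype.card_prod, ← Nat.card_eq_fintype_card,
    ← Set.ncard_range_of_injective optionSumSet_injective]
  refine Set.ncard_le_ncard ?_ (Set.toFinite _)
  rintro _ ⟨⟨o, T⟩, rfl⟩
  exact optionSumSet_mem_hub_bwdStates x₀ o T

end NFA'

end Hub

theorem half_mul_sqrt_mul_two_rpow_le {n : ℕ} {x : ℝ} (hx : 0 ≤ x)
    (h : ((n : ℝ) + 1) * 2 ^ n ≤ (2 * x) ^ 2) :
    (1 / 2 : ℝ) * Real.sqrt (n + 1) * 2 ^ ((n : ℝ) / 2) ≤ x := by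
  have hsq : ((1 / 2 : ℝ) * Real.sqrt (n + 1) * 2 ^ ((n : ℝ) / 2)) ^ 2 = (n + 1) * 2 ^ n / 4 := by
    rw [Real.rpow_div_two_eq_sqrt _ zero_le_two, Real.rpow_natCast, mul_pow, mul_pow, ← pow_mul,
      mul_comm n 2, pow_mul, Real.sq_sqrt (by positivity), Real.sq_sqrt zero_le_two]
    ring
  refine (pow_le_pow_iff_left₀ (by positivity) hx two_ne_zero).mp ?_
  rw [hsq]
  linarith

theorem succ_le_two_mul_succ_of_le_sq {N k : ℕ} (hN : 1 ≤ N)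
    (h : (N + 1) * 2 ^ N ≤ (2 * 2 ^ k) ^ 2) : N + 1 ≤ 2 * (k + 1) := by
  have : 2 ^ (N + 1) ≤ 2 ^ (2 * k + 2) :=
    calc 2 ^ (N + 1) = 2 * 2 ^ N := pow_succ' 2 N
      _ ≤ (N + 1) * 2 ^ N := Nat.mul_le_mul_right _ (by omega)
      _ ≤ (2 * 2 ^ k) ^ 2 := h
      _ = 2 ^ (2 * k + 2) := by ring
  have := (Nat.pow_le_pow_iff_right one_lt_two).mp this
  omega

theorem mul_mul_le_sq_of_sq_lt {N k a b : ℕ} (hNk : N + 1 ≤ 2 * (k + 1))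
    (h : a ^ 2 < (N + 1) * (a * b)) : (N + 1) * (a * b) ≤ (2 * ((k + 1) * b)) ^ 2 := by
  have hab : a < (N + 1) * b :=
    Nat.lt_of_mul_lt_mul_left (a := a) (by rw [← sq, mul_left_comm]; exact h)
  calc (N + 1) * (a * b) ≤ (N + 1) * ((N + 1) * b * b) := by gcongr
    _ ≤ (2 * (k + 1)) * (2 * (k + 1)) * (b * b) := by
      rw [← mul_assoc, ← mul_assoc, mul_assoc]; gcongr
    _ = (2 * ((k + 1) * b)) ^ 2 := by ring

theorem exists_balanced_split (N : ℕ) (hN : 1 ≤ N) :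
    ∃ k, 1 ≤ k ∧ k ≤ N ∧ (N + 1) * 2 ^ N ≤ (2 * 2 ^ k) ^ 2 ∧
      (N + 1) * 2 ^ N ≤ (2 * ((k + 1) * 2 ^ (N - k))) ^ 2 := by
  have hPN : (N + 1) * 2 ^ N ≤ (2 * 2 ^ N) ^ 2 := by
    have : N + 1 ≤ 2 ^ N := Nat.lt_two_pow_self
    nlinarith
  have hP : ∃ j, (N + 1) * 2 ^ N ≤ (2 * 2 ^ (j + 1)) ^ 2 :=
    ⟨N - 1, by rwa [Nat.sub_add_cancel hN]⟩
  set j := Nat.find hP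
  have hfwd : (N + 1) * 2 ^ N ≤ (2 * 2 ^ (j + 1)) ^ 2 := Nat.find_spec hP
  have hjN : j + 1 ≤ N := by
    have := Nat.find_min' hP (m := N - 1) (by rwa [Nat.sub_add_cancel hN])
    omega
  refine ⟨j + 1, by omega, hjN, hfwd, ?_⟩
  rcases Nat.eq_zero_or_pos j with hj | hj
  · rwa [hj, zero_add, ← pow_succ', Nat.sub_add_cancel hN]
  · have hmin : (2 ^ (j + 1)) ^ 2 < (N + 1) * 2 ^ N := by
      have := Nat.find_min hP (m := j - 1) (by omega)
      rwa [Nat.sub_add_cancel hj, not_le, ← pow_succ'] at this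
    have hsplit : 2 ^ (j + 1) * 2 ^ (N - (j + 1)) = 2 ^ N := by
      rw [← pow_add, Nat.add_sub_cancel' hjN]
    rw [← hsplit] at hmin ⊢
    exact mul_mul_le_sq_of_sq_lt (succ_le_two_mul_succ_of_le_sq hN hfwd) hmin

/-- For every `n ≥ 0` there exists a UFA with `n` states (over some finite
alphabet) whose forward and backward determinizations both have at least
`(1/2) · √(n+1) · 2^(n/2)` states. -/
theorem exists_ufa_large_determinizations (n : ℕ) :
    ∃ (Q A : Type) (iQ : Fintype Q) (_ : Fintype A) (M : NFA' Q A),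
      @Fintype.card Q iQ = n ∧ M.Unambiguous ∧
      (1 / 2 : ℝ) * Real.sqrt (n + 1) * 2 ^ ((n : ℝ) / 2) ≤ (M.fwdStates.ncard : ℝ) ∧
      (1 / 2 : ℝ) * Real.sqrt (n + 1) * 2 ^ ((n : ℝ) / 2) ≤ (M.bwdStates.ncard : ℝ) := by
  rcases Nat.eq_zero_or_pos n with rfl | hn
  · have hbound := half_mul_sqrt_mul_two_rpow_le (n := 0) zero_le_one (by norm_num)
    let M : NFA' (Fin 0) Unit := ⟨fun _ _ _ => False, ∅, ∅⟩
    refine ⟨Fin 0, Unit, inferInstance, inferInstance, M, rfl, M.unambiguous_of_subsingleton,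
      hbound.trans ?_, hbound.trans ?_⟩
    · exact_mod_cast M.one_le_ncard_fwdStates
    · exact_mod_cast M.one_le_ncard_bwdStates
  · obtain ⟨k, hk, hkn, hfwd, hbwd⟩ := exists_balanced_split n hn
    let x₀ : Fin k := ⟨0, hk⟩
    refine ⟨Fin k ⊕ Fin (n - k), _, inferInstance, inferInstance, NFA'.hub x₀, by simp [hkn],
      NFA'.hub_unambiguous x₀,
      (half_mul_sqrt_mul_two_rpow_le (x := (2 ^ k : ℕ)) (by positivity)
        (by exact_mod_cast hfwd)).trans (Nat.cast_le.mpr ?_),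
      (half_mul_sqrt_mul_two_rpow_le (x := ((k + 1) * 2 ^ (n - k) : ℕ)) (by positivity)
        (by exact_mod_cast hbwd)).trans (Nat.cast_le.mpr ?_)⟩
    · simpa using NFA'.two_pow_card_le_ncard_hub_fwdStates (β := Fin (n - k)) x₀
    · simpa using NFA'.card_mul_two_pow_card_le_ncard_hub_bwdStates (β := Fin (n - k)) x₀
end

section
/- Let (V,E) be a finite simple graph and S ⊆ V. The set of pairs (X,Y) with X ∪ Y = S, X ∩ Y = ∅, X a clique and Y a coclique is in bijection with P_S := { X ⊆ S | X is a clique and S \ X is a coclique }; consequently the number of such disjoint pairs is at most |S| + 1. -/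
/-!
For `X, Y ∈ P_S` the set `X \ Y` is both a clique (inside `X`) and a coclique (inside `S \ Y`),
so it has at most one element. A family of subsets of `S` with `|A \ B| ≤ 1` for all members has
at most `|S| + 1` members, by induction on `S`: erasing a point `s` from every member merges at
most one pair, since if `C`, `D` avoid `s` and `C ∪ {s}`, `D ∪ {s}` are members, then
`(C ∪ {s}) \ D = {s} ∪ (C \ D)` forces `C ⊆ D`, and symmetrically.
-/

open Finset

namespace Finset

variable {α : Type*} [DecidableEq α]

theorem subset_of_insert_mem_of_card_sdiff_le_one {F : Finset (Finset α)}
    (hF : ∀ A ∈ F, ∀ B ∈ F, #(A \ B) ≤ 1) {s : α} {A B : Finset α}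
    (hsA : insert s A ∈ F) (hB : B ∈ F) (hA : s ∉ A) (hsB : s ∉ B) : A ⊆ B := by
  have h := hF _ hsA _ hB
  rw [insert_sdiff_of_notMem _ hsB, card_insert_of_notMem fun h => hA (mem_sdiff.1 h).1] at h
  exact sdiff_eq_empty_iff_subset.1 (card_eq_zero.1 (by omega))

theorem card_le_card_image_erase_add_one {F : Finset (Finset α)}
    (hF : ∀ A ∈ F, ∀ B ∈ F, #(A \ B) ≤ 1) (s : α) :
    #F ≤ #(F.image (·.erase s)) + 1 := by
  set F₁ := F.filter (s ∈ ·)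
  set F₀ := F.filter (s ∉ ·)
  have himage : F.image (·.erase s) = F₁.image (·.erase s) ∪ F₀ := by
    conv_lhs => rw [← filter_union_filter_not_eq (s ∈ ·) F, image_union]
    congr 1
    exact (image_congr fun A hA => erase_eq_of_notMem (mem_filter.1 hA).2).trans image_id
  have hF₁ : #(F₁.image (·.erase s)) = #F₁ :=
    card_image_of_injOn fun A hA B hB => erase_injOn' s (mem_filter.1 hA).2 (mem_filter.1 hB).2
  -- the sets hit twice by erasing `s` are the `A ∌ s` with `A, insert s A ∈ F`
  have hcollision : ∀ A ∈ F₁.image (·.erase s) ∩ F₀, insert s A ∈ F ∧ A ∈ F ∧ s ∉ A := by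
    simp only [mem_inter, mem_image, mem_filter, F₁, F₀]
    rintro _ ⟨⟨A, ⟨hA, hsA⟩, rfl⟩, hA', hsA'⟩
    exact ⟨by rwa [insert_erase hsA], hA', hsA'⟩
  have hcollisions : #(F₁.image (·.erase s) ∩ F₀) ≤ 1 := by
    refine card_le_one.2 fun A hA B hB => ?_
    obtain ⟨hsA, hA, hsA'⟩ := hcollision A hA
    obtain ⟨hsB, hB, hsB'⟩ := hcollision B hB
    exact (subset_of_insert_mem_of_card_sdiff_le_one hF hsA hB hsA' hsB').antisymm
      (subset_of_insert_mem_of_card_sdiff_le_one hF hsB hA hsB' hsA')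
  have hunion := card_union_add_card_inter (F₁.image (·.erase s)) F₀
  have hsplit : #F₁ + #F₀ = #F := card_filter_add_card_filter_not _
  rw [himage]
  omega

theorem card_le_card_add_one_of_card_sdiff_le_one {S : Finset α} {F : Finset (Finset α)}
    (hFS : ∀ A ∈ F, A ⊆ S) (hF : ∀ A ∈ F, ∀ B ∈ F, #(A \ B) ≤ 1) : #F ≤ #S + 1 := by
  induction S using Finset.induction_on generalizing F with
  | empty =>
    calc #F ≤ #{(∅ : Finset α)} :=
          card_le_card fun A hA => mem_singleton.2 (subset_empty.1 (hFS A hA))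
      _ = #(∅ : Finset α) + 1 := rfl
  | insert s T hs ih =>
    calc #F ≤ #(F.image (·.erase s)) + 1 := card_le_card_image_erase_add_one hF s
      _ ≤ #T + 1 + 1 := by
        gcongr
        refine ih (forall_mem_image.2 fun A hA => subset_insert_iff.1 (hFS A hA)) ?_
        simp only [forall_mem_image]
        intro A hA B hB
        refine (card_le_card fun x => ?_).trans (hF A hA B hB)
        simp only [mem_sdiff, mem_erase]
        tauto
      _ = #(insert s T) + 1 := by rw [card_insert_of_notMem hs]

end Finset

theorem Set.ncard_le_ncard_add_one_of_subsingleton_diff {α : Type*} {S : Set α} (hS : S.Finite)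
    {𝓕 : Set (Set α)} (h𝓕S : ∀ A ∈ 𝓕, A ⊆ S) (h𝓕 : ∀ A ∈ 𝓕, ∀ B ∈ 𝓕, (A \ B).Subsingleton) :
    𝓕.ncard ≤ S.ncard + 1 := by
  classical
  obtain ⟨T, rfl⟩ := hS.exists_finset_coe
  set F := T.powerset.filter fun A : Finset α => ↑A ∈ 𝓕
  have h𝓕F : 𝓕 = (↑) '' (F : Set (Finset α)) := by
    ext A
    constructor
    · intro hA
      obtain ⟨A, rfl⟩ := (T.finite_toSet.subset (h𝓕S A hA)).exists_finset_coe
      exact ⟨A, mem_filter.2 ⟨Finset.mem_powerset.2 (Finset.coe_subset.1 (h𝓕S _ hA)), hA⟩, rfl⟩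
    · rintro ⟨A, hA, rfl⟩
      exact (mem_filter.1 hA).2
  rw [h𝓕F, Set.ncard_image_of_injective _ coe_injective, Set.ncard_coe_finset,
    Set.ncard_coe_finset]
  refine card_le_card_add_one_of_card_sdiff_le_one
    (fun A hA => Finset.mem_powerset.1 (mem_filter.1 hA).1) fun A hA B hB => ?_
  rw [card_le_one_iff_subsingleton, coe_sdiff]
  exact h𝓕 _ (mem_filter.1 hA).2 _ (mem_filter.1 hB).2

theorem SimpleGraph.IsClique.subsingleton_of_isIndepSet {V : Type*} {G : SimpleGraph V}
    {s : Set V} (hc : G.IsClique s) (hi : G.IsIndepSet s) : s.Subsingleton :=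
  fun _ hx _ hy => by_contra fun hxy => hi hx hy hxy (hc hx hy hxy)

def Set.complementaryPairsEquiv {α : Type*} (S : Set α) (P Q : Set α → Prop) :
    {p : Set α × Set α | p.1 ∪ p.2 = S ∧ p.1 ∩ p.2 = ∅ ∧ P p.1 ∧ Q p.2} ≃
      {X : Set α | X ⊆ S ∧ P X ∧ Q (S \ X)} :=
  have diff_eq {X Y : Set α} (hU : X ∪ Y = S) (hI : X ∩ Y = ∅) : S \ X = Y := by
    rw [← hU, Set.union_sdiff_left, (Set.disjoint_iff_inter_eq_empty.2 hI).symm.sdiff_eq_left]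
  { toFun p := ⟨p.1.1, Set.subset_union_left.trans p.2.1.subset, p.2.2.2.1,
      (congrArg Q (diff_eq p.2.1 p.2.2.1)).mpr p.2.2.2.2⟩
    invFun X := ⟨(X.1, S \ X.1), Set.union_sdiff_cancel X.2.1, Set.inter_sdiff_self _ _, X.2.2⟩
    left_inv p := Subtype.ext (Prod.ext rfl (diff_eq p.2.1 p.2.2.1))
    right_inv _ := rfl }

/-- The set of pairs `(X,Y)` with `X ∪ Y = S`, `X ∩ Y = ∅`, `X` a clique and `Y`
a coclique is in bijection with `P_S = {X ⊆ S | X clique, S \ X coclique}`;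
consequently the number of such disjoint pairs is at most `|S| + 1`. -/
theorem disjoint_pairs_equiv_and_card {V : Type} [Fintype V]
    (G : SimpleGraph V) (S : Set V) :
    Nonempty
      (↥{p : Set V × Set V | p.1 ∪ p.2 = S ∧ p.1 ∩ p.2 = ∅ ∧
          G.IsClique p.1 ∧ p.2.Pairwise fun u v => ¬ G.Adj u v} ≃
       ↥{X : Set V | X ⊆ S ∧ G.IsClique X ∧
          (S \ X).Pairwise fun u v => ¬ G.Adj u v}) ∧
    {p : Set V × Set V | p.1 ∪ p.2 = S ∧ p.1 ∩ p.2 = ∅ ∧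
        G.IsClique p.1 ∧ p.2.Pairwise fun u v => ¬ G.Adj u v}.ncard ≤ S.ncard + 1 := by
  let e := Set.complementaryPairsEquiv S G.IsClique G.IsIndepSet
  refine ⟨⟨e⟩, ?_⟩
  rw [Set.ncard_congr' e]
  exact Set.ncard_le_ncard_add_one_of_subsingleton_diff S.toFinite (fun X hX => hX.1)
    fun X hX Y hY => (hX.2.1.subset Set.sdiff_subset).subsingleton_of_isIndepSet
      (hY.2.2.mono (Set.sdiff_subset_sdiff_left hX.1))
end
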